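/- arXiv:1209.3391 — 6 statements merged into one kernel-verified Lean document; each statement's English description precedes it below -/
import Mathlib

section
/- Let μ be a σ-finite atomless measure on a measurable space and let L¹(μ) denote the Banach space of (equivalence classes of) complex-valued μ-integrable functions with norm ‖f‖₁ = ∫|f| dμ. Then for every f ∈ L¹(μ) there exists g ∈ L¹(μ) such that ‖f + g‖₁ = ‖f − g‖₁ = ‖f‖₁ = ‖g‖₁. -/
open MeasureTheory

/-- An atom of a measure `μ`: a measurable set `A` with `0 < μ A < ∞` such that every
measurable subset `B ⊆ A` satisfies `μ B = 0` or `μ B = μ A`. -/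
def IsMeasureAtom {α : Type*} [MeasurableSpace α] (μ : Measure α) (A : Set α) : Prop :=
  MeasurableSet A ∧ 0 < μ A ∧ μ A < ⊤ ∧
    ∀ B, B ⊆ A → MeasurableSet B → μ B = 0 ∨ μ B = μ A

/-!
Split the mass of `‖f‖` in half. Since `μ` is atomless, so is the finite measure `‖f‖ₑ • μ`,
and Sierpiński's theorem (obtained greedily: keep adding a disjoint piece of at least half the
largest admissible size) yields a measurable `S` with `∫_S ‖f‖ = ∫_Sᶜ ‖f‖`. Then `g = f` on `S`
and `g = -f` off `S` works: `|g| = |f|`, while `f + g = 2 f 1_S` and `f - g = 2 f 1_Sᶜ`.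
-/

open Set
open scoped ENNReal

section

variable {α : Type*} [MeasurableSpace α]

section Sierpinski

variable {ν : Measure α}

theorem exists_subset_measure_pos_lt (hν : ∀ A, ¬ IsMeasureAtom ν A) {A : Set α}
    (hA : MeasurableSet A) (hfin : ν A ≠ ∞) (hpos : 0 < ν A) :
    ∃ B ⊆ A, MeasurableSet B ∧ 0 < ν B ∧ ν B < ν A := by
  have h := hν A
  simp only [IsMeasureAtom, not_and, not_forall, not_or] at h
  obtain ⟨B, hBA, hB, hB0, hBA'⟩ := h hA hpos hfin.lt_top
  exact ⟨B, hBA, hB, pos_iff_ne_zero.2 hB0, (measure_mono hBA).lt_of_ne hBA'⟩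

theorem exists_subset_measure_pos_le_half (hν : ∀ A, ¬ IsMeasureAtom ν A) {A : Set α}
    (hA : MeasurableSet A) (hfin : ν A ≠ ∞) (hpos : 0 < ν A) :
    ∃ B ⊆ A, MeasurableSet B ∧ 0 < ν B ∧ ν B ≤ ν A / 2 := by
  obtain ⟨B, hBA, hB, hB0, hBA'⟩ := exists_subset_measure_pos_lt hν hA hfin hpos
  have hsum : ν B + ν (A \ B) = ν A := by
    rw [measure_add_sdiff hB.nullMeasurableSet, union_eq_self_of_subset_left hBA]
  by_cases hB_half : ν B ≤ ν A / 2
  · exact ⟨B, hBA, hB, hB0, hB_half⟩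
  refine ⟨A \ B, sdiff_subset, hA.diff hB, pos_iff_ne_zero.2 fun h ↦ ?_, ?_⟩
  · rw [h, add_zero] at hsum
    exact hBA'.ne hsum
  · by_contra hAB_half
    have := ENNReal.add_lt_add (not_le.1 hB_half) (not_le.1 hAB_half)
    rw [ENNReal.add_halves, hsum] at this
    exact this.false

theorem exists_subset_measure_pos_le (hν : ∀ A, ¬ IsMeasureAtom ν A) {A : Set α}
    (hA : MeasurableSet A) (hfin : ν A ≠ ∞) (hpos : 0 < ν A) {ε : ℝ≥0∞} (hε : ε ≠ 0) :
    ∃ B ⊆ A, MeasurableSet B ∧ 0 < ν B ∧ ν B ≤ ε := by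
  have halving : ∀ n : ℕ, ∃ B ⊆ A, MeasurableSet B ∧ 0 < ν B ∧ ν B ≤ 2⁻¹ ^ n * ν A := by
    intro n
    induction n with
    | zero => exact ⟨A, subset_rfl, hA, hpos, by simp⟩
    | succ n ih =>
      obtain ⟨B, hBA, hB, hB0, hBA'⟩ := ih
      obtain ⟨C, hCB, hC, hC0, hCB'⟩ := exists_subset_measure_pos_le_half hν hB
        (ne_top_of_le_ne_top hfin (measure_mono hBA)) hB0
      refine ⟨C, hCB.trans hBA, hC, hC0, hCB'.trans ?_⟩
      rw [pow_succ', mul_assoc, ENNReal.div_eq_inv_mul]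
      gcongr
  obtain ⟨n, hn⟩ := ENNReal.exists_inv_two_pow_lt (ENNReal.div_pos hε hfin).ne'
  obtain ⟨B, hBA, hB, hB0, hBA'⟩ := halving n
  refine ⟨B, hBA, hB, hB0, hBA'.trans ?_⟩
  calc 2⁻¹ ^ n * ν A ≤ ε / ν A * ν A := by gcongr
    _ ≤ ε := (ENNReal.div_mul_cancel hpos.ne' hfin).le

theorem exists_disjoint_half_maximal (ν : Measure α) {r : ℝ≥0∞} (hr : r ≠ ∞) {S : Set α}
    (hS : ν S ≤ r) :
    ∃ B, MeasurableSet B ∧ Disjoint S B ∧ ν S + ν B ≤ r ∧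
      ∀ C, MeasurableSet C → Disjoint S C → ν S + ν C ≤ r → ν C ≤ 2 * ν B := by
  set T := {t | ∃ C, MeasurableSet C ∧ Disjoint S C ∧ ν S + ν C ≤ r ∧ ν C = t}
  have hT : sSup T ≠ ∞ := ne_top_of_le_ne_top hr <| sSup_le <| by
    rintro _ ⟨C, -, -, hCr, rfl⟩
    exact le_add_self.trans hCr
  obtain ⟨_, ⟨B, hB, hSB, hBr, rfl⟩, hTB⟩ : ∃ t ∈ T, sSup T ≤ 2 * t := by
    rcases eq_or_ne (sSup T) 0 with hT0 | hT0
    · exact ⟨0, ⟨∅, .empty, disjoint_empty _, by simpa using hS, measure_empty⟩,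
        hT0.trans_le bot_le⟩
    · obtain ⟨t, ht, hlt⟩ := lt_sSup_iff.1 (ENNReal.half_lt_self hT0 hT)
      refine ⟨t, ht, ?_⟩
      rw [ENNReal.div_lt_iff (by norm_num) (by norm_num), mul_comm] at hlt
      exact hlt.le
  exact ⟨B, hB, hSB, hBr, fun C hC hSC hCr ↦ (le_sSup (s := T) ⟨C, hC, hSC, hCr, rfl⟩).trans hTB⟩

/-- **Sierpiński's theorem**. -/
theorem exists_measurableSet_measure_eq [IsFiniteMeasure ν] (hν : ∀ A, ¬ IsMeasureAtom ν A)
    {r : ℝ≥0∞} (hr : r ≤ ν univ) : ∃ S, MeasurableSet S ∧ ν S = r := by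
  have hr_top : r ≠ ∞ := ne_top_of_le_ne_top (measure_ne_top ν _) hr
  choose! next hnext hnext_disj hnext_le hnext_max using
    fun S (hS : ν S ≤ r) ↦ exists_disjoint_half_maximal ν hr_top hS
  set S : ℕ → Set α := fun n ↦ (fun T ↦ T ∪ next T)^[n] ∅
  have hS_succ (n : ℕ) : S (n + 1) = S n ∪ next (S n) := Function.iterate_succ_apply' _ _ _
  have hS (n : ℕ) : MeasurableSet (S n) ∧ ν (S n) ≤ r := by
    induction n with
    | zero => simp [S]
    | succ n ih =>
      rw [hS_succ, measure_union (hnext_disj _ ih.2) (hnext _ ih.2)]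
      exact ⟨ih.1.union (hnext _ ih.2), hnext_le _ ih.2⟩
  have hS_mono : Monotone S := monotone_nat_of_le_succ fun n ↦ hS_succ n ▸ subset_union_left
  set U := ⋃ n, S n
  have hU : MeasurableSet U := .iUnion fun n ↦ (hS n).1
  have hUr : ν U ≤ r := hS_mono.measure_iUnion ▸ iSup_le fun n ↦ (hS n).2
  refine ⟨U, hU, hUr.antisymm (not_lt.1 fun hlt ↦ ?_)⟩
  obtain ⟨C, hCU, hC, hC0, hCr⟩ := exists_subset_measure_pos_le hν hU.compl (measure_ne_top ν _)
    (by rw [measure_compl hU (measure_ne_top ν _)]; exact tsub_pos_of_lt (hlt.trans_le hr))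
    (tsub_pos_of_lt hlt).ne'
  -- `C` stays admissible at every stage, so each stage adds at least `ν C / 2`.
  have hgrow (n : ℕ) : n * ν C ≤ 2 * ν (S n) := by
    induction n with
    | zero => simp
    | succ n ih =>
      have hSC : Disjoint (S n) C :=
        disjoint_compl_right_iff_subset.2 (subset_iUnion S n) |>.mono_right hCU
      have hadm : ν (S n) + ν C ≤ r := calc
        ν (S n) + ν C ≤ ν U + (r - ν U) := add_le_add (measure_mono (subset_iUnion S n)) hCr
        _ = r := add_tsub_cancel_of_le hUr
      rw [hS_succ, measure_union (hnext_disj _ (hS n).2) (hnext _ (hS n).2), mul_add]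
      push_cast
      rw [add_mul, one_mul]
      exact add_le_add ih (hnext_max _ (hS n).2 C hC hSC hadm)
  obtain ⟨n, hn⟩ := ENNReal.exists_nat_mul_gt hC0.ne'
    (ENNReal.mul_ne_top (ENNReal.ofNat_ne_top (n := 2)) hr_top)
  have hSr : 2 * ν (S n) ≤ 2 * r := by gcongr; exact (hS n).2
  exact ((hn.trans_le (hgrow n)).trans_le hSr).false

end Sierpinski

theorem withDensity_not_isMeasureAtom {μ : Measure α} (hμ : ∀ A, ¬ IsMeasureAtom μ A)
    {w : α → ℝ≥0∞} (hw : Measurable w) (A : Set α) : ¬ IsMeasureAtom (μ.withDensity w) A := by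
  rintro ⟨hA, hpos, hfin, hatom⟩
  -- On a layer `A ∩ {c < w}` of positive mass, `c • μ ≤ μ.withDensity w`, so a `μ`-splitting
  -- of that layer also splits `A` for `μ.withDensity w`.
  obtain ⟨c, hc, hAc⟩ : ∃ c : ℝ≥0∞, c ≠ 0 ∧ μ (A ∩ {x | c < w x}) ≠ 0 := by
    have hsupp : μ ({x | w x ≠ 0} ∩ A) ≠ 0 :=
      (withDensity_apply_eq_zero' hw.aemeasurable).not.1 hpos.ne'
    have hcover : {x | w x ≠ 0} ∩ A ⊆ ⋃ n : ℕ, A ∩ {x | (n : ℝ≥0∞)⁻¹ < w x} :=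
      fun x ⟨hx, hxA⟩ ↦ mem_iUnion.2 ((ENNReal.exists_inv_nat_lt hx).imp fun _ hn ↦ ⟨hxA, hn⟩)
    obtain ⟨n, hn⟩ := not_forall.1 fun h ↦ hsupp (measure_mono_null hcover (measure_iUnion_null h))
    exact ⟨_, ENNReal.inv_ne_zero.2 (ENNReal.natCast_ne_top n), hn⟩
  set A' := A ∩ {x | c < w x}
  have hA' : MeasurableSet A' := hA.inter (measurableSet_lt measurable_const hw)
  have hdom : ∀ E ⊆ A', MeasurableSet E → c * μ E ≤ μ.withDensity w E := fun E hEA' hE ↦ by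
    rw [withDensity_apply _ hE, ← setLIntegral_const]
    exact setLIntegral_mono hw fun x hx ↦ (hEA' hx).2.le
  have hA'_fin : μ A' < ∞ := by
    have := (hdom A' subset_rfl hA').trans_lt ((measure_mono inter_subset_left).trans_lt hfin)
    exact ENNReal.lt_top_of_mul_ne_top_right this.ne hc
  have hA'_split := hμ A'
  simp only [IsMeasureAtom, not_and, not_forall, not_or] at hA'_split
  obtain ⟨B, hBA', hB, hB0, hBA'_ne⟩ := hA'_split hA' (pos_iff_ne_zero.2 hAc) hA'_fin
  rcases hatom B (hBA'.trans inter_subset_left) hB with hνB | hνB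
  · exact hB0 <| (mul_eq_zero.1 (le_zero_iff.1 (hνB ▸ hdom B hBA' hB))).resolve_left hc
  · have hνdiff : μ.withDensity w (A' \ B) = 0 := by
      rw [measure_sdiff hBA' hB.nullMeasurableSet (hνB ▸ hfin.ne)]
      exact tsub_eq_zero_of_le (hνB ▸ measure_mono inter_subset_left)
    have hμdiff : μ (A' \ B) = 0 := (mul_eq_zero.1 (le_zero_iff.1
      (hνdiff ▸ hdom _ sdiff_subset (hA'.diff hB)))).resolve_left hc
    exact hBA'_ne (measure_eq_measure_of_null_sdiff hBA' hμdiff)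

theorem exists_measurableSet_setLIntegral_eq_compl {μ : Measure α}
    (hμ : ∀ A, ¬ IsMeasureAtom μ A) {w : α → ℝ≥0∞} (hw : AEMeasurable w μ)
    (hfin : ∫⁻ x, w x ∂μ ≠ ∞) :
    ∃ S, MeasurableSet S ∧ ∫⁻ x in S, w x ∂μ = ∫⁻ x in Sᶜ, w x ∂μ := by
  have : IsFiniteMeasure (μ.withDensity w) := isFiniteMeasure_withDensity hfin
  have hν : ∀ A, ¬ IsMeasureAtom (μ.withDensity w) A := by
    rw [withDensity_congr_ae hw.ae_eq_mk]
    exact withDensity_not_isMeasureAtom hμ hw.measurable_mk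
  obtain ⟨S, hS, hS_half⟩ := exists_measurableSet_measure_eq hν ENNReal.half_le_self
  refine ⟨S, hS, ?_⟩
  rw [← withDensity_apply _ hS, ← withDensity_apply _ hS.compl,
    measure_compl hS (measure_ne_top _ _), hS_half, ENNReal.sub_half (measure_ne_top _ _)]

section Reflection

variable {μ : Measure α} {E : Type*} [NormedAddCommGroup E] [NormedSpace ℝ E]

theorem lintegral_enorm_add_indicator_sub_indicator (f : α → E) {S : Set α}
    (hS : MeasurableSet S) :
    ∫⁻ x, ‖f x + (S.indicator f x - Sᶜ.indicator f x)‖ₑ ∂μ = 2 * ∫⁻ x in S, ‖f x‖ₑ ∂μ := by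
  have hpt (x : α) :
      ‖f x + (S.indicator f x - Sᶜ.indicator f x)‖ₑ = S.indicator (fun y ↦ 2 * ‖f y‖ₑ) x := by
    by_cases hx : x ∈ S
    · simp [hx, ← two_smul ℝ (f x), enorm_smul, Real.enorm_eq_ofReal]
    · simp [hx]
  rw [lintegral_congr hpt, lintegral_indicator hS, lintegral_const_mul' _ _ ENNReal.ofNat_ne_top]

theorem L1.exists_norm_add_eq_norm_sub_eq_norm_of_setLIntegral_eq_compl (f : Lp E 1 μ)
    {S : Set α} (hS : MeasurableSet S)
    (hS_half : ∫⁻ x in S, ‖f x‖ₑ ∂μ = ∫⁻ x in Sᶜ, ‖f x‖ₑ ∂μ) :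
    ∃ g : Lp E 1 μ, ‖f + g‖ = ‖f‖ ∧ ‖f - g‖ = ‖f‖ ∧ ‖g‖ = ‖f‖ := by
  set ψ := S.indicator f - Sᶜ.indicator f
  have hψ : MemLp ψ 1 μ := ((Lp.memLp f).indicator hS).sub ((Lp.memLp f).indicator hS.compl)
  have hnorm {h : Lp E 1 μ} {u : α → E} (hu : h =ᵐ[μ] u) :
      ‖h‖ = (∫⁻ x, ‖u x‖ₑ ∂μ).toReal := by
    rw [L1.norm_def, lintegral_congr_ae (hu.mono fun _ hx ↦ congrArg enorm hx)]
  have hf : ‖f‖ = (2 * ∫⁻ x in S, ‖f x‖ₑ ∂μ).toReal := by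
    rw [L1.norm_def, ← lintegral_add_compl _ hS, ← hS_half, two_mul]
  refine ⟨hψ.toLp ψ, ?_, ?_, ?_⟩
  · rw [hnorm ((Lp.coeFn_add _ _).trans hψ.coeFn_toLp.add_left), hf]
    exact congrArg _ (lintegral_enorm_add_indicator_sub_indicator f hS)
  · have hpt (x : α) : f x - ψ x = f x + (Sᶜ.indicator f x - Sᶜᶜ.indicator f x) := by
      rw [sub_eq_add_neg, compl_compl]
      simp [ψ]
    rw [hnorm ((Lp.coeFn_sub _ _).trans (Filter.EventuallyEq.rfl.sub hψ.coeFn_toLp)), hf,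
      hS_half]
    simp only [Pi.sub_apply, hpt, lintegral_enorm_add_indicator_sub_indicator f hS.compl]
  · have hpt (x : α) : ‖ψ x‖ₑ = ‖f x‖ₑ := by
      by_cases hx : x ∈ S <;> simp [ψ, hx]
    rw [hnorm hψ.coeFn_toLp, L1.norm_def]
    simp only [hpt]

end Reflection

end

theorem norm_equation_solvable_of_atomless_general {α : Type*} [MeasurableSpace α]
    (μ : Measure α) (hμ : ∀ A : Set α, ¬ IsMeasureAtom μ A)
    (f : Lp ℂ 1 μ) :
    ∃ g : Lp ℂ 1 μ, ‖f + g‖ = ‖f‖ ∧ ‖f - g‖ = ‖f‖ ∧ ‖g‖ = ‖f‖ := by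
  obtain ⟨S, hS, hS_half⟩ := exists_measurableSet_setLIntegral_eq_compl hμ
    (Lp.aestronglyMeasurable f).enorm (L1.integrable_coeFn f).2.ne
  exact L1.exists_norm_add_eq_norm_sub_eq_norm_of_setLIntegral_eq_compl f hS hS_half

/-- For a σ-finite atomless measure `μ`, for every `f ∈ L¹(μ)` there exists `g ∈ L¹(μ)`
with `‖f + g‖₁ = ‖f - g‖₁ = ‖f‖₁ = ‖g‖₁`. -/
theorem norm_equation_solvable_of_atomless {α : Type*} [MeasurableSpace α]
    (μ : Measure α) [SigmaFinite μ] (hμ : ∀ A : Set α, ¬ IsMeasureAtom μ A)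
    (f : Lp ℂ 1 μ) :
    ∃ g : Lp ℂ 1 μ, ‖f + g‖ = ‖f‖ ∧ ‖f - g‖ = ‖f‖ ∧ ‖g‖ = ‖f‖ :=
  norm_equation_solvable_of_atomless_general μ hμ f
end

section
/- Let μ be a σ-finite measure, and let f, g ∈ L¹(μ) with f ≠ 0 satisfy ‖f + g‖₁ = ‖f − g‖₁ = ‖f‖₁ = ‖g‖₁. Then there exists a measurable set E contained in the support S := {x : f(x) ≠ 0} such that ∫_E |f| dμ = ‖f‖₁ / 2 and g = f·(1_E − 1_{S∖E}) almost everywhere (in particular g vanishes a.e. where f vanishes). -/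
/-!
Pointwise, `‖a‖ + ‖b‖ ≤ ‖a + b‖ + ‖a - b‖`, so the norm equations force equality almost
everywhere. In a strictly convex space equality means `u = a + b` and `v = a - b` satisfy
`‖u + v‖ = ‖u - v‖ = ‖u‖ + ‖v‖`; then `u, v` lie on a common ray, where `‖u - v‖ = |‖u‖ - ‖v‖|`,
so `u = 0` or `v = 0`, i.e. `g = ±f` almost everywhere. The set `E` is a measurable kernel of
`{g = f ≠ 0}`, and then `‖f + g‖ = 2 ‖f‖ 1_E` gives `∫_E ‖f‖ = ‖f‖₁ / 2`.
-/

open MeasureTheory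

section StrictConvex

variable {V : Type*} [NormedAddCommGroup V] [NormedSpace ℝ V]

theorem two_mul_norm_le_norm_add_add_norm_sub (a b : V) :
    2 * ‖a‖ ≤ ‖a + b‖ + ‖a - b‖ ∧ 2 * ‖b‖ ≤ ‖a + b‖ + ‖a - b‖ := by
  have hsum : (a + b) + (a - b) = (2 : ℝ) • a := by rw [two_smul]; abel
  have hdiff : (a + b) - (a - b) = (2 : ℝ) • b := by rw [two_smul]; abel
  constructor
  · calc 2 * ‖a‖ = ‖(a + b) + (a - b)‖ := by rw [hsum, norm_smul, Real.norm_two]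
      _ ≤ ‖a + b‖ + ‖a - b‖ := norm_add_le _ _
  · calc 2 * ‖b‖ = ‖(a + b) - (a - b)‖ := by rw [hdiff, norm_smul, Real.norm_two]
      _ ≤ ‖a + b‖ + ‖a - b‖ := norm_sub_le _ _

theorem norm_add_norm_le_norm_add_add_norm_sub (a b : V) :
    ‖a‖ + ‖b‖ ≤ ‖a + b‖ + ‖a - b‖ := by
  obtain ⟨ha, hb⟩ := two_mul_norm_le_norm_add_add_norm_sub a b
  linarith

theorem eq_or_eq_neg_of_norm_add_add_norm_sub_le [StrictConvexSpace ℝ V] {a b : V}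
    (h : ‖a + b‖ + ‖a - b‖ ≤ ‖a‖ + ‖b‖) : b = a ∨ b = -a := by
  obtain ⟨ha, hb⟩ := two_mul_norm_le_norm_add_add_norm_sub a b
  set u := a + b
  set v := a - b
  have hsum : ‖u + v‖ = ‖u‖ + ‖v‖ := by
    have : u + v = (2 : ℝ) • a := by simp only [u, v, two_smul]; abel
    rw [this, norm_smul, Real.norm_two]
    linarith
  have hdiff : ‖u - v‖ = ‖u‖ + ‖v‖ := by
    have : u - v = (2 : ℝ) • b := by simp only [u, v, two_smul]; abel
    rw [this, norm_smul, Real.norm_two]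
    linarith
  have hray : ‖u - v‖ = |‖u‖ - ‖v‖| := (sameRay_iff_norm_add.mpr hsum).norm_sub
  have huv : ‖u‖ = 0 ∨ ‖v‖ = 0 := by
    rcases abs_cases (‖u‖ - ‖v‖) with ⟨habs, -⟩ | ⟨habs, -⟩ <;>
      [right; left] <;> linarith [norm_nonneg u, norm_nonneg v]
  rcases huv with hu | hv
  · exact Or.inr (eq_neg_of_add_eq_zero_right (norm_eq_zero.mp hu))
  · exact Or.inl (sub_eq_zero.mp (norm_eq_zero.mp hv)).symm

variable {α : Type*} [MeasurableSpace α] {μ : Measure α}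

theorem ae_eq_or_eq_neg_of_integral_norm_add_add_integral_norm_sub_le [StrictConvexSpace ℝ V]
    {f g : α → V} (hf : Integrable f μ) (hg : Integrable g μ)
    (h : ∫ x, ‖f x + g x‖ ∂μ + ∫ x, ‖f x - g x‖ ∂μ ≤ ∫ x, ‖f x‖ ∂μ + ∫ x, ‖g x‖ ∂μ) :
    ∀ᵐ x ∂μ, g x = f x ∨ g x = -f x := by
  have hadd_int : Integrable (fun x => ‖f x + g x‖) μ := (hf.add hg).norm
  have hsub_int : Integrable (fun x => ‖f x - g x‖) μ := (hf.sub hg).norm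
  have hsum_int : Integrable (fun x => ‖f x + g x‖ + ‖f x - g x‖) μ := hadd_int.add hsub_int
  have hnorm_int : Integrable (fun x => ‖f x‖ + ‖g x‖) μ := hf.norm.add hg.norm
  set D : α → ℝ := fun x => ‖f x + g x‖ + ‖f x - g x‖ - (‖f x‖ + ‖g x‖)
  have hD_nonneg : 0 ≤ D := fun x =>
    sub_nonneg.mpr (norm_add_norm_le_norm_add_add_norm_sub (f x) (g x))
  have hD_integral : ∫ x, D x ∂μ = 0 := by
    refine le_antisymm ?_ (integral_nonneg hD_nonneg)
    rw [integral_sub hsum_int hnorm_int, integral_add hadd_int hsub_int,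
      integral_add hf.norm hg.norm]
    linarith
  have hD_ae : D =ᵐ[μ] 0 :=
    (integral_eq_zero_iff_of_nonneg hD_nonneg (hsum_int.sub hnorm_int)).mp hD_integral
  filter_upwards [hD_ae] with x hx
  exact eq_or_eq_neg_of_norm_add_add_norm_sub_le (sub_eq_zero.mp hx).le

end StrictConvex

section SignedIndicator

variable {α : Type*} [MeasurableSpace α] {μ : Measure α} {E : Set α}

theorem ae_eq_mul_indicator_sub_indicator {R : Type*} [Ring R] {f g : α → R}
    (hpm : ∀ᵐ x ∂μ, g x = f x ∨ g x = -f x)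
    (hE : E =ᵐ[μ] ({x | g x = f x} ∩ Function.support f : Set α)) :
    g =ᵐ[μ] fun x => f x * (E.indicator (fun _ => (1 : R)) x -
      ({x | f x ≠ 0} \ E).indicator (fun _ => (1 : R)) x) := by
  filter_upwards [hpm, hE.mem_iff] with x hx hxE
  by_cases hfx : f x = 0
  · have hgx : g x = 0 := by rcases hx with h | h <;> simp [h, hfx]
    simp [hfx, hgx]
  by_cases hgf : g x = f x
  · have hmem : x ∈ E := hxE.mpr ⟨hgf, hfx⟩
    simp [hmem, hgf]
  · have hmem : x ∉ E := fun h => hgf (hxE.mp h).1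
    simp [hmem, hfx, hx.resolve_left hgf]

theorem integral_norm_add_eq_two_mul_setIntegral_norm {R : Type*} [NormedRing R]
    [NormedSpace ℝ R] {f g : α → R} (hEm : MeasurableSet E)
    (hg : g =ᵐ[μ] fun x => f x * (E.indicator (fun _ => (1 : R)) x -
      ({x | f x ≠ 0} \ E).indicator (fun _ => (1 : R)) x)) :
    ∫ x, ‖f x + g x‖ ∂μ = 2 * ∫ x in E, ‖f x‖ ∂μ := by
  have hpt : (fun x => ‖f x + g x‖) =ᵐ[μ] E.indicator (fun x => 2 * ‖f x‖) := by
    filter_upwards [hg] with x hx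
    rw [hx]
    by_cases hxE : x ∈ E
    · have hxS : x ∉ {x | f x ≠ 0} \ E := fun h => h.2 hxE
      rw [Set.indicator_of_mem hxE, Set.indicator_of_notMem hxS, Set.indicator_of_mem hxE,
        sub_zero, mul_one, ← two_smul ℝ, norm_smul, Real.norm_two]
    · by_cases hfx : f x = 0
      · simp [hxE, hfx]
      · have hxS : x ∈ {x | f x ≠ 0} \ E := ⟨hfx, hxE⟩
        simp [hxE, hxS]
  rw [integral_congr_ae hpt, integral_indicator hEm, integral_const_mul]

end SignedIndicator

theorem solutions_of_norm_equation_general {α : Type*} [MeasurableSpace α] (μ : Measure α)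
    (f g : α → ℂ) (hf : Integrable f μ) (hg : Integrable g μ)
    (h1 : ∫ x, ‖f x + g x‖ ∂μ = ∫ x, ‖f x‖ ∂μ)
    (h2 : ∫ x, ‖f x - g x‖ ∂μ = ∫ x, ‖f x‖ ∂μ)
    (h3 : ∫ x, ‖g x‖ ∂μ = ∫ x, ‖f x‖ ∂μ) :
    ∃ E : Set α, MeasurableSet E ∧ E ⊆ {x | f x ≠ 0} ∧
      (∫ x in E, ‖f x‖ ∂μ = (∫ x, ‖f x‖ ∂μ) / 2) ∧
      g =ᵐ[μ] fun x =>
        f x * (E.indicator (fun _ => (1 : ℂ)) x -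
          ({x | f x ≠ 0} \ E).indicator (fun _ => (1 : ℂ)) x) := by
  have hpm : ∀ᵐ x ∂μ, g x = f x ∨ g x = -f x :=
    ae_eq_or_eq_neg_of_integral_norm_add_add_integral_norm_sub_le hf hg (by linarith)
  have hs : NullMeasurableSet ({x | g x = f x} ∩ Function.support f) μ :=
    (hg.1.nullMeasurableSet_eq_fun hf.1).inter hf.1.nullMeasurableSet_support
  obtain ⟨E, hEs, hEm, hE⟩ := hs.exists_measurable_subset_ae_eq
  have hES : E ⊆ {x | f x ≠ 0} := hEs.trans Set.inter_subset_right
  have hg_eq := ae_eq_mul_indicator_sub_indicator hpm hE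
  refine ⟨E, hEm, hES, ?_, hg_eq⟩
  have := integral_norm_add_eq_two_mul_setIntegral_norm hEm hg_eq
  linarith

/-- If `f, g ∈ L¹(μ)` with `f ≠ 0` satisfy `‖f + g‖₁ = ‖f − g‖₁ = ‖f‖₁ = ‖g‖₁`
(with `μ` σ-finite), then there is a measurable set `E` contained in the support
`S = {x | f x ≠ 0}` such that `∫_E |f| dμ = ‖f‖₁ / 2` and
`g = f·(1_E − 1_{S \ E})` almost everywhere. -/
theorem solutions_of_norm_equation {α : Type*} [MeasurableSpace α] (μ : Measure α)
    [SigmaFinite μ] (f g : α → ℂ) (hf : Integrable f μ) (hg : Integrable g μ)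
    (hf0 : ¬ f =ᵐ[μ] 0)
    (h1 : ∫ x, ‖f x + g x‖ ∂μ = ∫ x, ‖f x‖ ∂μ)
    (h2 : ∫ x, ‖f x - g x‖ ∂μ = ∫ x, ‖f x‖ ∂μ)
    (h3 : ∫ x, ‖g x‖ ∂μ = ∫ x, ‖f x‖ ∂μ) :
    ∃ E : Set α, MeasurableSet E ∧ E ⊆ {x | f x ≠ 0} ∧
      (∫ x in E, ‖f x‖ ∂μ = (∫ x, ‖f x‖ ∂μ) / 2) ∧
      g =ᵐ[μ] fun x =>
        f x * (E.indicator (fun _ => (1 : ℂ)) x -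
          ({x | f x ≠ 0} \ E).indicator (fun _ => (1 : ℂ)) x) :=
  solutions_of_norm_equation_general μ f g hf hg h1 h2 h3
end

section
/- Let μ be a σ-finite atomless measure and let f ∈ L¹(μ) with ‖f‖₁ = 1. Then there exists a map γ from [0,2] to L¹(μ) such that γ(0) = f, γ(2) = −f, ‖γ(t)‖₁ = 1 for all t ∈ [0,2], and ‖γ(s) − γ(t)‖₁ = |s − t| for all s, t ∈ [0,2]. (That is, f and −f are joined by a girth curve: a curve lying on the unit sphere of L¹(μ) of length 2.) -/
open MeasureTheory

/-!
The measure `ν = ‖f‖ μ` is a probability measure without atoms: σ-finiteness turns a `ν`-atom into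
a `μ`-atom of finite measure, on which `f` does not vanish. By Sierpiński's argument (pick almost
maximal admissible pieces greedily) an atomless finite measure takes every value between `ν S` and
`ν T` on sets squeezed between `S ⊆ T`; refining dyadically gives an increasing family `B t` with
`ν (B t) = t` for `t ∈ [0, 1]`. Flipping the sign of `f` on `B (t / 2)` gives the curve, since
`‖γ s - γ t‖₁ = 2 ν (B (t / 2) \ B (s / 2)) = t - s`.
-/

open Set Filter Topology ENNReal

namespace MeasureTheory

variable {α : Type*} [MeasurableSpace α]

section Sierpinski

variable {ν : Measure α} [IsFiniteMeasure ν]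

lemma exists_subset_measure_ne_zero_le_half (hν : ∀ A, ¬ IsMeasureAtom ν A) {A : Set α}
    (hA : MeasurableSet A) (h0 : ν A ≠ 0) :
    ∃ B ⊆ A, MeasurableSet B ∧ ν B ≠ 0 ∧ ν B ≤ 2⁻¹ * ν A := by
  have hsplit := hν A
  simp only [IsMeasureAtom, not_and, not_forall, not_or] at hsplit
  obtain ⟨C, hCA, hC, hC0, hCne⟩ := hsplit hA (pos_iff_ne_zero.2 h0) (measure_lt_top ν A)
  rcases le_total (ν C) (2⁻¹ * ν A) with hle | hle
  · exact ⟨C, hCA, hC, hC0, hle⟩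
  have hdiff : ν (A \ C) = ν A - ν C := measure_sdiff hCA hC.nullMeasurableSet (measure_ne_top ν C)
  refine ⟨A \ C, sdiff_subset, hA.diff hC, ?_, ?_⟩
  · rw [hdiff]
    exact (tsub_pos_of_lt ((measure_mono hCA).lt_of_ne hCne)).ne'
  · calc ν (A \ C) = ν A - ν C := hdiff
      _ ≤ ν A - 2⁻¹ * ν A := tsub_le_tsub_left hle _
      _ = 2⁻¹ * ν A := by
        rw [mul_comm, ← div_eq_mul_inv, ENNReal.sub_half (measure_ne_top ν A)]

lemma exists_subset_measure_ne_zero_le (hν : ∀ A, ¬ IsMeasureAtom ν A) {A : Set α}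
    (hA : MeasurableSet A) (h0 : ν A ≠ 0) {ε : ℝ≥0∞} (hε : ε ≠ 0) :
    ∃ B ⊆ A, MeasurableSet B ∧ ν B ≠ 0 ∧ ν B ≤ ε := by
  have hiter (n : ℕ) : ∃ B ⊆ A, MeasurableSet B ∧ ν B ≠ 0 ∧ ν B ≤ 2⁻¹ ^ n * ν A := by
    induction n with
    | zero => exact ⟨A, subset_rfl, hA, h0, by simp⟩
    | succ n ih =>
      obtain ⟨B, hBA, hB, hB0, hBle⟩ := ih
      obtain ⟨C, hCB, hC, hC0, hCle⟩ := exists_subset_measure_ne_zero_le_half hν hB hB0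
      refine ⟨C, hCB.trans hBA, hC, hC0, ?_⟩
      calc ν C ≤ 2⁻¹ * ν B := hCle
        _ ≤ 2⁻¹ * (2⁻¹ ^ n * ν A) := by gcongr
        _ = 2⁻¹ ^ (n + 1) * ν A := by ring
  obtain ⟨n, hn⟩ := ENNReal.exists_inv_two_pow_lt (ENNReal.div_pos hε (measure_ne_top ν A)).ne'
  obtain ⟨B, hBA, hB, hB0, hBle⟩ := hiter n
  exact ⟨B, hBA, hB, hB0, hBle.trans (ENNReal.mul_le_of_le_div hn.le)⟩

lemma exists_half_maximal_subset_sdiff {A S : Set α} {r : ℝ≥0∞} (hSr : ν S ≤ r) :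
    ∃ C ⊆ A \ S, MeasurableSet C ∧ ν S + ν C ≤ r ∧
      ∀ D ⊆ A \ S, MeasurableSet D → ν S + ν D ≤ r → ν D ≤ 2 * ν C := by
  set d := ⨆ (D : Set α) (_ : D ⊆ A \ S ∧ MeasurableSet D ∧ ν S + ν D ≤ r), ν D
  have hle_d : ∀ D ⊆ A \ S, MeasurableSet D → ν S + ν D ≤ r → ν D ≤ d := fun D h1 h2 h3 =>
    le_iSup₂ (f := fun D (_ : D ⊆ A \ S ∧ MeasurableSet D ∧ ν S + ν D ≤ r) => ν D) D ⟨h1, h2, h3⟩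
  rcases eq_or_ne d 0 with hd | hd
  · exact ⟨∅, empty_subset _, .empty, by simpa using hSr,
      fun D h1 h2 h3 => by simpa [hd] using hle_d D h1 h2 h3⟩
  have hd_top : d ≠ ∞ := ne_top_of_le_ne_top (measure_ne_top ν univ)
    (iSup₂_le fun D _ => measure_mono (subset_univ D))
  obtain ⟨C, hC⟩ := lt_iSup_iff.1 (ENNReal.half_lt_self hd hd_top)
  obtain ⟨hC, hdC⟩ := lt_iSup_iff.1 hC
  refine ⟨C, hC.1, hC.2.1, hC.2.2, fun D h1 h2 h3 => (hle_d D h1 h2 h3).trans ?_⟩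
  rw [mul_comm]
  exact (ENNReal.div_le_iff two_ne_zero ofNat_ne_top).1 hdC.le

lemma exists_greedy_seq (A : Set α) (r : ℝ≥0∞) :
    ∃ S : ℕ → Set α, Monotone S ∧ (∀ n, MeasurableSet (S n)) ∧ (∀ n, S n ⊆ A) ∧
      (∀ n, ν (S n) ≤ r) ∧ ∀ n, ∀ D ⊆ A \ S n, MeasurableSet D → ν (S n) + ν D ≤ r →
        ν (S n) + ν D / 2 ≤ ν (S (n + 1)) := by
  let Admissible (S : Set α) : Prop := MeasurableSet S ∧ S ⊆ A ∧ ν S ≤ r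
  have hstep (S : Set α) (hS : Admissible S) : ∃ S', Admissible S' ∧ S ⊆ S' ∧
      ∀ D ⊆ A \ S, MeasurableSet D → ν S + ν D ≤ r → ν S + ν D / 2 ≤ ν S' := by
    obtain ⟨C, hCA, hC, hSC, hmax⟩ := exists_half_maximal_subset_sdiff (A := A) hS.2.2
    have hdisj : Disjoint S C := disjoint_left.2 fun x hxS hxC => (hCA hxC).2 hxS
    have hunion : ν (S ∪ C) = ν S + ν C := measure_union hdisj hC
    refine ⟨S ∪ C, ⟨hS.1.union hC, union_subset hS.2.1 (hCA.trans sdiff_subset), ?_⟩,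
      subset_union_left, fun D h1 h2 h3 => ?_⟩
    · rwa [hunion]
    · rw [hunion]
      gcongr
      exact ENNReal.div_le_of_le_mul' (hmax D h1 h2 h3)
  choose next hnext_adm hnext_sup hnext_large using hstep
  let S : ℕ → {S // Admissible S} :=
    fun n => Nat.rec ⟨∅, .empty, empty_subset A, by simp⟩ (fun _ S => ⟨_, hnext_adm S.1 S.2⟩) n
  exact ⟨fun n => (S n).1, monotone_nat_of_le_succ fun n => hnext_sup _ (S n).2,
    fun n => (S n).2.1, fun n => (S n).2.2.1, fun n => (S n).2.2.2,
    fun n => hnext_large _ (S n).2⟩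

lemma exists_subset_measure_eq (hν : ∀ A, ¬ IsMeasureAtom ν A) {A : Set α}
    (hA : MeasurableSet A) {r : ℝ≥0∞} (hr : r ≤ ν A) :
    ∃ B ⊆ A, MeasurableSet B ∧ ν B = r := by
  obtain ⟨S, hS_mono, hS_meas, hS_sub, hS_le, hS_large⟩ := exists_greedy_seq (ν := ν) A r
  have hU : ν (⋃ n, S n) = ⨆ n, ν (S n) := hS_mono.measure_iUnion
  refine ⟨⋃ n, S n, iUnion_subset hS_sub, .iUnion hS_meas,
    le_antisymm (hU ▸ iSup_le hS_le) (not_lt.1 fun hlt => ?_)⟩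
  -- a set of positive measure that is admissible at every step, which forces linear growth
  have h0 : ν (A \ ⋃ n, S n) ≠ 0 :=
    ((tsub_pos_of_lt (hlt.trans_le hr)).trans_le le_measure_sdiff).ne'
  obtain ⟨D, hDA, hD, hD0, hDle⟩ :=
    exists_subset_measure_ne_zero_le hν (hA.diff (.iUnion hS_meas)) h0 (tsub_pos_of_lt hlt).ne'
  have hgrow (n : ℕ) : n * (ν D / 2) ≤ ν (S n) := by
    induction n with
    | zero => simp
    | succ n ih =>
      have hSn : ν (S n) ≤ ν (⋃ n, S n) := measure_mono (subset_iUnion S n)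
      calc ((n + 1 : ℕ) : ℝ≥0∞) * (ν D / 2) = n * (ν D / 2) + ν D / 2 := by push_cast; ring
        _ ≤ ν (S n) + ν D / 2 := by gcongr
        _ ≤ ν (S (n + 1)) := hS_large n D
          (hDA.trans (sdiff_subset_sdiff_right (subset_iUnion S n))) hD
          ((add_le_add hSn hDle).trans (add_tsub_cancel_of_le hlt.le).le)
  have hD2 : ν D / 2 ≠ 0 := by simpa using hD0
  have hD2_top : ν D / 2 ≠ ∞ := ENNReal.div_ne_top (measure_ne_top ν D) two_ne_zero
  obtain ⟨n, hn⟩ :=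
    ENNReal.exists_nat_gt (ENNReal.div_ne_top (hr.trans_lt (measure_lt_top ν A)).ne hD2)
  exact (ENNReal.div_lt_iff (.inl hD2) (.inl hD2_top)).1 hn
    |>.trans_le (hgrow n) |>.trans_le (hS_le n) |>.false

lemma exists_between_measure_eq (hν : ∀ A, ¬ IsMeasureAtom ν A) {S T : Set α}
    (hS : MeasurableSet S) (hT : MeasurableSet T) (hST : S ⊆ T) {r : ℝ≥0∞} (hSr : ν S ≤ r)
    (hrT : r ≤ ν T) : ∃ B, S ⊆ B ∧ B ⊆ T ∧ MeasurableSet B ∧ ν B = r := by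
  have hle : r - ν S ≤ ν (T \ S) := by
    rw [measure_sdiff hST hS.nullMeasurableSet (measure_ne_top ν S)]
    exact tsub_le_tsub_right hrT _
  obtain ⟨C, hCTS, hC, hCr⟩ := exists_subset_measure_eq hν (hT.diff hS) hle
  refine ⟨S ∪ C, subset_union_left, union_subset hST (hCTS.trans sdiff_subset), hS.union hC, ?_⟩
  rw [measure_union (disjoint_left.2 fun x hxS hxC => (hCTS hxC).2 hxS) hC, hCr,
    add_tsub_cancel_of_le hSr]

end Sierpinski

section DyadicChain

variable {ν : Measure α}

structure IsDyadicChain (ν : Measure α) (n : ℕ) (a : ℕ → Set α) : Prop where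
  measurableSet : ∀ k, MeasurableSet (a k)
  mono : Monotone a
  measure_eq : ∀ k, ν (a k) = ENNReal.ofReal (min (k / 2 ^ n) 1)

lemma isDyadicChain_zero [IsProbabilityMeasure ν] :
    IsDyadicChain ν 0 fun k => {_x | k ≠ 0} where
  measurableSet _ := .const _
  mono k l hkl x hk := by simp only [mem_ofPred_eq] at hk ⊢; omega
  measure_eq k := by
    rcases eq_or_ne k 0 with rfl | hk
    · simp
    · have : (1 : ℝ) ≤ k := Nat.one_le_cast.2 (Nat.one_le_iff_ne_zero.2 hk)
      simp [hk, this]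

lemma IsDyadicChain.exists_refinement [IsFiniteMeasure ν] (hν : ∀ A, ¬ IsMeasureAtom ν A)
    {n : ℕ} {a : ℕ → Set α} (ha : IsDyadicChain ν n a) :
    ∃ b, IsDyadicChain ν (n + 1) b ∧ ∀ k, b (2 * k) = a k := by
  have hhalf (k : ℕ) : ((2 * k : ℕ) : ℝ) / 2 ^ (n + 1) = k / 2 ^ n := by
    push_cast; rw [pow_succ]; field_simp
  have hmid (k : ℕ) : ∃ M, a k ⊆ M ∧ M ⊆ a (k + 1) ∧ MeasurableSet M ∧
      ν M = ENNReal.ofReal (min (((2 * k + 1 : ℕ) : ℝ) / 2 ^ (n + 1)) 1) := by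
    refine exists_between_measure_eq hν (ha.measurableSet k) (ha.measurableSet (k + 1))
      (ha.mono k.le_succ) ?_ ?_ <;> rw [ha.measure_eq, ← hhalf] <;>
      gcongr ENNReal.ofReal (min ((?_ : ℝ) / _) 1) <;> norm_cast <;> omega
  choose M haM hMa hM_meas hM using hmid
  let b (k : ℕ) : Set α := if Even k then a (k / 2) else M (k / 2)
  have hb_even (k : ℕ) : b (2 * k) = a k := by simp [b]
  have hb_odd (k : ℕ) : b (2 * k + 1) = M k := by
    simp [b, show (2 * k + 1) / 2 = k by omega]
  refine ⟨b, ⟨fun k => ?_, monotone_nat_of_le_succ fun k => ?_, fun k => ?_⟩, hb_even⟩ <;>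
    obtain ⟨m, rfl | rfl⟩ := Nat.even_or_odd' k
  · exact hb_even m ▸ ha.measurableSet m
  · exact hb_odd m ▸ hM_meas m
  · rw [hb_even, hb_odd]; exact haM m
  · rw [hb_odd, show 2 * m + 1 + 1 = 2 * (m + 1) by ring, hb_even]; exact hMa m
  · rw [hb_even, ha.measure_eq, hhalf]
  · rw [hb_odd, hM]

lemma exists_seq_isDyadicChain [IsProbabilityMeasure ν] (hν : ∀ A, ¬ IsMeasureAtom ν A) :
    ∃ a : ℕ → ℕ → Set α, (∀ n, IsDyadicChain ν n (a n)) ∧ ∀ n k, a (n + 1) (2 * k) = a n k := by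
  choose refinement h_refine h_refine_even using
    fun n (a : {a // IsDyadicChain ν n a}) => a.2.exists_refinement hν
  let a (n : ℕ) : {a // IsDyadicChain ν n a} :=
    Nat.rec ⟨_, isDyadicChain_zero⟩ (fun n a => ⟨refinement n a, h_refine n a⟩) n
  exact ⟨fun n => (a n).1, fun n => (a n).2, fun n => h_refine_even n (a n)⟩

lemma exists_monotone_measure_eq_ofReal [IsProbabilityMeasure ν] (hν : ∀ A, ¬ IsMeasureAtom ν A) :
    ∃ B : ℝ → Set α, Monotone B ∧ (∀ t, MeasurableSet (B t)) ∧
      ∀ t ∈ Icc (0 : ℝ) 1, ν (B t) = ENNReal.ofReal t := by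
  obtain ⟨a, ha, ha_refine⟩ := exists_seq_isDyadicChain hν
  have hfloor (t : ℝ) (n : ℕ) : 2 * ⌊t * 2 ^ n⌋₊ ≤ ⌊t * 2 ^ (n + 1)⌋₊ := by
    have h := Nat.mul_div_le ⌊t * 2 ^ n * (2 : ℕ)⌋₊ 2
    rw [Nat.mul_cast_floor_div_cancel two_ne_zero] at h
    simpa [pow_succ, mul_assoc] using h
  have hchain (t : ℝ) : Monotone fun n => a n ⌊t * 2 ^ n⌋₊ :=
    monotone_nat_of_le_succ fun n => by
      rw [← ha_refine]
      exact (ha (n + 1)).mono (hfloor t n)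
  refine ⟨fun t => ⋃ n, a n ⌊t * 2 ^ n⌋₊,
    fun s t hst => iUnion_mono fun n => (ha n).mono (Nat.floor_mono (by gcongr)),
    fun t => .iUnion fun n => (ha n).measurableSet _, fun t ht => ?_⟩
  have hlim : Tendsto (fun n : ℕ => (⌊t * 2 ^ n⌋₊ : ℝ) / 2 ^ n) atTop (𝓝 t) :=
    (tendsto_nat_floor_mul_div_atTop ht.1).comp
      (tendsto_pow_atTop_atTop_of_one_lt one_lt_two)
  refine tendsto_nhds_unique (tendsto_measure_iUnion_atTop (hchain t)) ?_
  simp_rw [Function.comp_def, (ha _).measure_eq]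
  convert ENNReal.tendsto_ofReal (hlim.min (tendsto_const_nhds (x := (1 : ℝ)))) using 2
  rw [min_eq_left ht.2]

end DyadicChain

lemma not_isMeasureAtom_withDensity {μ : Measure α} [SigmaFinite μ]
    (hμ : ∀ A, ¬ IsMeasureAtom μ A) {w : α → ℝ≥0∞} (hw : Measurable w) (A : Set α) :
    ¬ IsMeasureAtom (μ.withDensity w) A := by
  rintro ⟨hA, hA0, hA_top, hA_atom⟩
  set ν := μ.withDensity w
  obtain ⟨n, hn⟩ : ∃ n, ν (A ∩ spanningSets μ n) ≠ 0 := by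
    by_contra! h
    refine hA0.ne' (measure_mono_null (fun x hx => ?_) (measure_iUnion_null h))
    simpa [← inter_iUnion] using hx
  -- on the part of `A` where `w ≠ 0`, the ν-null sets are exactly the μ-null sets
  set S := {x | w x ≠ 0} ∩ (A ∩ spanningSets μ n)
  have hS : MeasurableSet S :=
    (hw (measurableSet_singleton 0)).compl.inter (hA.inter (measurableSet_spanningSets μ n))
  have hnull {B : Set α} (hB : B ⊆ S) : ν B = 0 ↔ μ B = 0 := by
    rw [withDensity_apply_eq_zero hw, inter_eq_right.2 (hB.trans inter_subset_left)]
  have hSA : S ⊆ A := inter_subset_right.trans inter_subset_left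
  refine hμ S ⟨hS, pos_iff_ne_zero.2 ?_, ?_, fun B hBS hB => ?_⟩
  · exact fun h => hn ((withDensity_apply_eq_zero hw).2 h)
  · exact (measure_mono (inter_subset_right.trans inter_subset_right)).trans_lt
      (measure_spanningSets_lt_top μ n)
  rcases hA_atom B (hBS.trans hSA) hB with hB0 | hBA
  · exact .inl ((hnull hBS).1 hB0)
  · refine .inr (measure_congr (ae_eq_set.2 ⟨by simp [sdiff_eq_empty.2 hBS], ?_⟩))
    refine (hnull sdiff_subset).1 ?_
    rw [measure_sdiff hBS hB.nullMeasurableSet (hBA.trans_lt hA_top).ne, hBA]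
    exact tsub_eq_zero_of_le (measure_mono hSA)

section GirthCurve

variable {E : Type*} [NormedAddCommGroup E] {μ : Measure α}

lemma eLpNorm_one_indicator (f : α → E) {s : Set α} (hs : MeasurableSet s) :
    eLpNorm (s.indicator f) 1 μ = μ.withDensity (‖f ·‖ₑ) s := by
  rw [eLpNorm_one_eq_lintegral_enorm, withDensity_apply _ hs, ← lintegral_indicator hs]
  simp_rw [enorm_indicator_eq_indicator_enorm]

lemma indicator_ae_eq_zero_iff_withDensity {f : α → E} (hf : AEStronglyMeasurable f μ)
    {s : Set α} (hs : MeasurableSet s) :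
    s.indicator f =ᵐ[μ] 0 ↔ μ.withDensity (‖f ·‖ₑ) s = 0 := by
  rw [← eLpNorm_eq_zero_iff (hf.indicator hs) one_ne_zero, eLpNorm_one_indicator f hs]

lemma withDensity_enorm_univ (f : Lp E 1 μ) :
    μ.withDensity (‖f ·‖ₑ) univ = ENNReal.ofReal ‖f‖ := by
  rw [← eLpNorm_one_indicator _ .univ, indicator_univ, Lp.norm_def,
    ENNReal.ofReal_toReal (Lp.eLpNorm_ne_top f)]

variable [NormedSpace ℝ E]

lemma exists_girth_curve_of_monotone (f : Lp E 1 μ) (hf : ‖f‖ = 1) {B : ℝ → Set α}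
    (hB_mono : Monotone B) (hB_meas : ∀ t, MeasurableSet (B t))
    (hB : ∀ t ∈ Icc (0 : ℝ) 1, μ.withDensity (‖f ·‖ₑ) (B t) = ENNReal.ofReal t) :
    ∃ γ : ℝ → Lp E 1 μ, γ 0 = f ∧ γ 2 = -f ∧ (∀ t ∈ Icc (0 : ℝ) 2, ‖γ t‖ = 1) ∧
      ∀ s ∈ Icc (0 : ℝ) 2, ∀ t ∈ Icc (0 : ℝ) 2, ‖γ s - γ t‖ = |s - t| := by
  set ν := μ.withDensity (‖f ·‖ₑ)
  have hf_meas : AEStronglyMeasurable f μ := (Lp.memLp f).1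
  have hν_univ : ν univ = 1 := by rw [withDensity_enorm_univ, hf, ENNReal.ofReal_one]
  have : IsFiniteMeasure ν := ⟨hν_univ ▸ ENNReal.one_lt_top⟩
  let g (t : ℝ) : α → E := f - (2 : ℝ) • (B (t / 2)).indicator f
  have hg (t : ℝ) : MemLp (g t) 1 μ :=
    (Lp.memLp f).sub (((Lp.memLp f).indicator (hB_meas _)).const_smul 2)
  have hg_sub {s t : ℝ} (hst : s ≤ t) :
      g s - g t = (2 : ℝ) • (B (t / 2) \ B (s / 2)).indicator f := by
    rw [indicator_sdiff (hB_mono (by linarith))]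
    simp only [g]
    module
  refine ⟨fun t => (hg t).toLp (g t), ?_, ?_, fun t _ => ?_, ?_⟩
  · have h0 : (B 0).indicator f =ᵐ[μ] 0 := by
      rw [indicator_ae_eq_zero_iff_withDensity hf_meas (hB_meas 0), hB 0 (by simp),
        ENNReal.ofReal_zero]
    refine ((hg 0).toLp_congr (Lp.memLp f) ?_).trans (Lp.toLp_coeFn f _)
    filter_upwards [h0] with x hx
    simp [g, hx]
  · have h1 : (B 1)ᶜ.indicator f =ᵐ[μ] 0 := by
      rw [indicator_ae_eq_zero_iff_withDensity hf_meas (hB_meas 1).compl,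
        measure_compl (hB_meas 1) (measure_ne_top ν _), hB 1 (by simp), hν_univ]
      simp
    refine ((hg 2).toLp_congr (Lp.memLp (-f)) ?_).trans (Lp.toLp_coeFn (-f) _)
    filter_upwards [h1, Lp.coeFn_neg f] with x hx hx_neg
    rw [indicator_compl] at hx
    simp only [g, hx_neg, show (2 : ℝ) / 2 = 1 by norm_num, Pi.sub_apply, Pi.smul_apply,
      Pi.neg_apply, Pi.zero_apply, sub_eq_zero] at hx ⊢
    rw [← hx, two_smul]
    abel
  · rw [Lp.norm_toLp, ← hf, Lp.norm_def]
    congr 1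
    refine eLpNorm_congr_norm_ae (.of_forall fun x => ?_)
    by_cases hx : x ∈ B (t / 2)
    · simp [g, hx, two_smul]
    · simp [g, hx]
  · intro s hs t ht
    wlog hst : s ≤ t generalizing s t
    · rw [norm_sub_rev, abs_sub_comm]
      exact this t ht s hs (le_of_not_ge hst)
    rw [← MemLp.toLp_sub, Lp.norm_toLp, hg_sub hst, eLpNorm_const_smul,
      eLpNorm_one_indicator _ ((hB_meas _).diff (hB_meas _)),
      measure_sdiff (hB_mono (by linarith)) (hB_meas _).nullMeasurableSet (measure_ne_top ν _),
      hB _ ⟨by linarith [hs.1], by linarith [ht.2]⟩, hB _ ⟨by linarith [hs.1], by linarith [ht.2]⟩,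
      ← ENNReal.ofReal_sub _ (by linarith [hs.1]), abs_sub_comm, abs_of_nonneg (by linarith),
      ENNReal.toReal_mul, ENNReal.toReal_ofReal (by linarith), toReal_enorm, Real.norm_two]
    ring

end GirthCurve

end MeasureTheory

/-- For a σ-finite atomless measure `μ`, every norm-one `f ∈ L¹(μ)` is joined to `−f`
by a girth curve, i.e. a curve on the unit sphere of length `2`. -/
theorem exists_girth_curve {α : Type*} [MeasurableSpace α] (μ : Measure α)
    [SigmaFinite μ] (hμ : ∀ A : Set α, ¬ IsMeasureAtom μ A)
    (f : Lp ℂ 1 μ) (hf : ‖f‖ = 1) :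
    ∃ γ : ℝ → Lp ℂ 1 μ, γ 0 = f ∧ γ 2 = -f ∧
      (∀ t ∈ Set.Icc (0 : ℝ) 2, ‖γ t‖ = 1) ∧
      (∀ s ∈ Set.Icc (0 : ℝ) 2, ∀ t ∈ Set.Icc (0 : ℝ) 2, ‖γ s - γ t‖ = |s - t|) := by
  have hw : Measurable fun x => ‖f x‖ₑ := (Lp.stronglyMeasurable f).measurable.enorm
  have : IsProbabilityMeasure (μ.withDensity (‖f ·‖ₑ)) :=
    ⟨by rw [withDensity_enorm_univ, hf, ENNReal.ofReal_one]⟩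
  obtain ⟨B, hB_mono, hB_meas, hB⟩ :=
    exists_monotone_measure_eq_ofReal (not_isMeasureAtom_withDensity hμ hw)
  exact exists_girth_curve_of_monotone f hf hB_mono hB_meas hB
end

section
/- Let μ be a measure and let A be an atom of μ, i.e. a measurable set with 0 < μ(A) < ∞ such that every measurable subset B ⊆ A satisfies μ(B) = 0 or μ(B) = μ(A). Set f := 1_A ∈ L¹(μ). Then there is no g ∈ L¹(μ) satisfying ‖f + g‖₁ = ‖f − g‖₁ = ‖f‖₁ = ‖g‖₁. -/
open MeasureTheory

theorem eq_or_eq_neg_of_norm_add_add_norm_sub_eq {E : Type*} [NormedAddCommGroup E]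
    [InnerProductSpace ℝ E] {a b : E} (ha : ‖a + b‖ + ‖a - b‖ = 2 * ‖a‖)
    (hb : ‖a + b‖ + ‖a - b‖ = 2 * ‖b‖) : b = a ∨ b = -a := by
  have parallelogram := parallelogram_law_with_norm ℝ a b
  have h_norm : ‖a‖ = ‖b‖ := by linarith
  have : ‖a + b‖ * ‖a - b‖ = 0 := by
    linear_combination ((‖a + b‖ + ‖a - b‖ + 2 * ‖a‖) / 2) * ha - (1 / 2) * parallelogram
      + (‖a‖ + ‖b‖) * h_norm
  rcases mul_eq_zero.mp this with h | h
  · exact Or.inr (eq_neg_of_add_eq_zero_right (norm_eq_zero.mp h))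
  · exact Or.inl (sub_eq_zero.mp (norm_eq_zero.mp h)).symm

theorem ae_eq_or_eq_neg_of_integral_norm_add_eq {α E : Type*} [MeasurableSpace α]
    {μ : Measure α} [NormedAddCommGroup E] [InnerProductSpace ℝ E] {f g : α → E}
    (hf : Integrable f μ) (hg : Integrable g μ)
    (h_add : ∫ x, ‖f x + g x‖ ∂μ = ∫ x, ‖f x‖ ∂μ) (h_sub : ∫ x, ‖f x - g x‖ ∂μ = ∫ x, ‖f x‖ ∂μ)
    (h_norm : ∫ x, ‖g x‖ ∂μ = ∫ x, ‖f x‖ ∂μ) :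
    ∀ᵐ x ∂μ, g x = f x ∨ g x = -f x := by
  have h_add_int : Integrable (fun x => ‖f x + g x‖) μ := (hf.add hg).norm
  have h_sub_int : Integrable (fun x => ‖f x - g x‖) μ := (hf.sub hg).norm
  have triangle_tight {h : α → E} (hh : Integrable h μ)
      (h_le : ∀ x, 2 * ‖h x‖ ≤ ‖f x + g x‖ + ‖f x - g x‖)
      (h_int : ∫ x, ‖h x‖ ∂μ = ∫ x, ‖f x‖ ∂μ) :
      ∀ᵐ x ∂μ, ‖f x + g x‖ + ‖f x - g x‖ = 2 * ‖h x‖ := by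
    refine ((integral_eq_iff_of_ae_le (hh.norm.const_mul 2)
      (g := fun x => ‖f x + g x‖ + ‖f x - g x‖) (h_add_int.add h_sub_int)
      (ae_of_all _ h_le)).mp ?_).mono fun x hx => hx.symm
    rw [integral_const_mul, integral_add h_add_int h_sub_int, h_add, h_sub, h_int]
    ring
  have le_f (x : α) : 2 * ‖f x‖ ≤ ‖f x + g x‖ + ‖f x - g x‖ := by
    simpa [← two_smul ℝ (f x), norm_smul] using norm_add_le (f x + g x) (f x - g x)
  have le_g (x : α) : 2 * ‖g x‖ ≤ ‖f x + g x‖ + ‖f x - g x‖ := by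
    simpa [← two_smul ℝ (g x), norm_smul] using norm_sub_le (f x + g x) (f x - g x)
  filter_upwards [triangle_tight hf le_f rfl, triangle_tight hg le_g h_norm] with x hx_f hx_g
  exact eq_or_eq_neg_of_norm_add_add_norm_sub_eq hx_f hx_g

namespace IsMeasureAtom

variable {α : Type*} [MeasurableSpace α] {μ : Measure α} {A : Set α}

theorem ae_mem_or_ae_notMem (hA : IsMeasureAtom μ A) {B : Set α} (hB : MeasurableSet B) :
    (∀ᵐ x ∂μ.restrict A, x ∈ B) ∨ ∀ᵐ x ∂μ.restrict A, x ∉ B := by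
  obtain ⟨hAm, -, hA_top, hatom⟩ := hA
  rcases hatom (A ∩ B) Set.inter_subset_left (hAm.inter hB) with h | h
  · right
    rwa [← measure_eq_zero_iff_ae_notMem, Measure.restrict_apply hB, Set.inter_comm]
  · left
    refine mem_ae_iff.mpr (?_ : μ.restrict A Bᶜ = 0)
    rw [Measure.restrict_apply hB.compl,
      Set.inter_comm, ← Set.sdiff_eq, ← Set.sdiff_self_inter,
      measure_sdiff Set.inter_subset_left (hAm.inter hB).nullMeasurableSet (h ▸ hA_top.ne), h,
      tsub_self]

theorem ae_eq_or_ae_eq_neg {E : Type*} [NormedAddCommGroup E] (hA : IsMeasureAtom μ A)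
    {f g : α → E} (hf : StronglyMeasurable f) (hg : AEStronglyMeasurable g μ)
    (hf_supp : Function.support f ⊆ A) (hfg : ∀ᵐ x ∂μ, g x = f x ∨ g x = -f x) :
    g =ᵐ[μ] f ∨ g =ᵐ[μ] -f := by
  have hB := hg.stronglyMeasurable_mk.measurableSet_eq_fun hf
  have off_A : ∀ x ∉ A, f x = 0 := fun x hx => Function.notMem_support.mp (mt (@hf_supp x) hx)
  rcases hA.ae_mem_or_ae_notMem hB with h | h <;> rw [ae_restrict_iff' hA.1] at h
  · left
    filter_upwards [h, hg.ae_eq_mk, hfg] with x hx hx_mk hx_pm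
    by_cases hxA : x ∈ A
    · exact hx_mk.trans (hx hxA)
    · rcases hx_pm with e | e <;> simp [e, off_A x hxA]
  · right
    filter_upwards [h, hg.ae_eq_mk, hfg] with x hx hx_mk hx_pm
    by_cases hxA : x ∈ A
    · exact hx_pm.resolve_left (hx_mk ▸ hx hxA)
    · rcases hx_pm with e | e <;> simp [e, off_A x hxA]

end IsMeasureAtom

/-- If `A` is an atom of `μ` and `f := 1_A`, then there is no `g ∈ L¹(μ)` with
`‖f + g‖₁ = ‖f − g‖₁ = ‖f‖₁ = ‖g‖₁`. -/
theorem no_solution_of_atom {α : Type*} [MeasurableSpace α] (μ : Measure α)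
    (A : Set α) (hA : IsMeasureAtom μ A) :
    ¬ ∃ g : α → ℂ, Integrable g μ ∧
      (∫ x, ‖A.indicator (fun _ => (1 : ℂ)) x + g x‖ ∂μ
        = ∫ x, ‖A.indicator (fun _ => (1 : ℂ)) x‖ ∂μ) ∧
      (∫ x, ‖A.indicator (fun _ => (1 : ℂ)) x - g x‖ ∂μ
        = ∫ x, ‖A.indicator (fun _ => (1 : ℂ)) x‖ ∂μ) ∧
      (∫ x, ‖g x‖ ∂μ = ∫ x, ‖A.indicator (fun _ => (1 : ℂ)) x‖ ∂μ) := by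
  rintro ⟨g, hg, h_add, h_sub, h_norm⟩
  set f : α → ℂ := A.indicator fun _ => 1
  have ⟨hAm, hA_pos, hA_top, _⟩ := hA
  have hf : Integrable f μ := (integrable_indicator_iff hAm).2 (integrableOn_const hA_top.ne)
  have hf_pos : 0 < ∫ x, ‖f x‖ ∂μ := by
    simp_rw [f, norm_indicator_eq_indicator_norm, norm_one]
    rw [← Pi.one_def, integral_indicator_one hAm]
    exact ENNReal.toReal_pos hA_pos.ne' hA_top.ne
  rcases hA.ae_eq_or_ae_eq_neg (stronglyMeasurable_const.indicator hAm) hg.1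
    Set.support_indicator_subset
    (ae_eq_or_eq_neg_of_integral_norm_add_eq hf hg h_add h_sub h_norm) with h | h
  · have : ∫ x, ‖f x + g x‖ ∂μ = 2 * ∫ x, ‖f x‖ ∂μ := by
      rw [← integral_const_mul]
      exact integral_congr_ae (h.mono fun x hx => by simp [hx, f, ← two_mul])
    linarith
  · have : ∫ x, ‖f x - g x‖ ∂μ = 2 * ∫ x, ‖f x‖ ∂μ := by
      rw [← integral_const_mul]
      exact integral_congr_ae (h.mono fun x hx => by simp [hx, f, ← two_mul])
    linarith
end

section
/- Let μ be a measure, let A be an atom of μ, and set f := 1_A ∈ L¹(μ). Then for every ψ ∈ L¹(μ) with ‖ψ‖₁ = ‖f‖₁, one has max(‖f + ψ‖₁, ‖f − ψ‖₁) ≥ √2 · ‖f‖₁. -/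
/-!
On the atom `A` the function `ψ` is a.e. equal to a constant `c`, so with `m = μ A` and
`T = ∫_{Aᶜ} |ψ|` we get `‖ψ‖₁ = |c| m + T = m` and `‖1_A ± ψ‖₁ = |1 ± c| m + T`. The claim
thus reduces to `√2 ≤ max |1 + c| |1 - c| + 1 - |c|` for `|c| ≤ 1`, which follows from the
parallelogram law: `max |1 ± c|² ≥ 1 + |c|² ≥ (1 + |c|)² / 2`.
-/

open MeasureTheory

namespace IsMeasureAtom

variable {α : Type*} [MeasurableSpace α] {μ : Measure α} {A : Set α}

theorem ae_restrict_mem_or_ae_restrict_notMem (hA : IsMeasureAtom μ A) {S : Set α}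
    (hS : MeasurableSet S) : (∀ᵐ x ∂μ.restrict A, x ∈ S) ∨ ∀ᵐ x ∂μ.restrict A, x ∉ S := by
  obtain ⟨hmA, -, hfin, hatom⟩ := hA
  rcases hatom (A ∩ S) Set.inter_subset_left (hmA.inter hS) with hnull | hfull
  · right
    rwa [← measure_eq_zero_iff_ae_notMem, Measure.restrict_apply hS, Set.inter_comm]
  · left
    have hdiff : μ (A \ S) = 0 := by
      have hsplit := measure_inter_add_sdiff (μ := μ) A hS
      rw [hfull] at hsplit
      exact (ENNReal.add_right_inj hfin.ne).1 (hsplit.trans (add_zero _).symm)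
    rwa [ae_iff, ← Set.compl_def, Measure.restrict_apply hS.compl, Set.inter_comm, ← Set.sdiff_eq]

theorem exists_ae_restrict_eq_const (hA : IsMeasureAtom μ A) {X : Type*} [MeasurableSpace X]
    [MeasurableSpace.CountablySeparated X] {g : α → X} (hg : AEMeasurable g (μ.restrict A)) :
    ∃ c, g =ᵐ[μ.restrict A] fun _ => c := by
  obtain ⟨a, -⟩ := nonempty_of_measure_ne_zero hA.2.1.ne'
  have : Nonempty X := ⟨g a⟩
  obtain ⟨c, hc⟩ := Filter.exists_eventuallyEq_const_of_forall_separating (f := hg.mk g)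
    MeasurableSet fun _ hU ↦ hA.ae_restrict_mem_or_ae_restrict_notMem (hg.measurable_mk hU)
  exact ⟨c, hg.ae_eq_mk.trans hc⟩

end IsMeasureAtom

section NormIntegral

variable {α E : Type*} [MeasurableSpace α] {μ : Measure α} {A : Set α}
  [NormedAddCommGroup E] {g : α → E} {d : E}

theorem integral_norm_eq_of_ae_restrict_eq_const (hA : MeasurableSet A) (hg : Integrable g μ)
    (hgd : g =ᵐ[μ.restrict A] fun _ => d) :
    ∫ x, ‖g x‖ ∂μ = ‖d‖ * μ.real A + ∫ x in Aᶜ, ‖g x‖ ∂μ := by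
  rw [← integral_add_compl hA hg.norm, integral_congr_ae (hgd.mono fun _ hx ↦ congrArg norm hx),
    setIntegral_const, smul_eq_mul, mul_comm]

theorem integral_norm_indicator_const_add_eq (hA : MeasurableSet A) (hμA : μ A ≠ ⊤) (u : E)
    (hg : Integrable g μ) (hgd : g =ᵐ[μ.restrict A] fun _ => d) :
    ∫ x, ‖A.indicator (fun _ => u) x + g x‖ ∂μ = ‖u + d‖ * μ.real A + ∫ x in Aᶜ, ‖g x‖ ∂μ := by
  have hu : Integrable (A.indicator fun _ => u) μ :=
    (integrable_indicator_iff hA).2 (integrableOn_const hμA)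
  have hsum : (fun x => A.indicator (fun _ => u) x + g x) =ᵐ[μ.restrict A] fun _ => u + d := by
    filter_upwards [ae_restrict_mem hA, hgd] with x hx hgx
    rw [Set.indicator_of_mem hx, hgx]
  rw [integral_norm_eq_of_ae_restrict_eq_const (g := fun x => _ + g x) hA (hu.add hg) hsum]
  congr 1
  refine setIntegral_congr_fun hA.compl fun x hx => ?_
  rw [Set.indicator_of_notMem hx, zero_add]

end NormIntegral

theorem sqrt_two_mul_le_add_sub_of_sq_add_sq_le {r s M : ℝ} (hrs : r ≤ s) (hM : 0 ≤ M)
    (h : s ^ 2 + r ^ 2 ≤ M ^ 2) : √2 * s ≤ M + (s - r) := by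
  have hsqrt : √2 ^ 2 = 2 := Real.sq_sqrt zero_le_two
  have hsum : s + r ≤ √2 * M := by
    refine (abs_le_of_sq_le_sq (by rw [mul_pow, hsqrt]; nlinarith [sq_nonneg (s - r)])
      (by positivity)).trans' (le_abs_self _)
  have hone : 1 ≤ √2 := Real.one_le_sqrt.2 one_le_two
  nlinarith [mul_le_mul_of_nonneg_right hone (sub_nonneg.2 hrs)]

section InnerProductSpace

variable {E : Type*} [NormedAddCommGroup E] [InnerProductSpace ℝ E]

theorem sq_norm_add_sq_norm_le_sq_max_norm_add_norm_sub (u v : E) :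
    ‖u‖ ^ 2 + ‖v‖ ^ 2 ≤ max ‖u + v‖ ‖u - v‖ ^ 2 := by
  have hpar := parallelogram_law_with_norm ℝ u v
  have hadd := pow_le_pow_left₀ (norm_nonneg (u + v)) (le_max_left _ ‖u - v‖) 2
  have hsub := pow_le_pow_left₀ (norm_nonneg (u - v)) (le_max_right ‖u + v‖ _) 2
  linarith

theorem sqrt_two_mul_norm_le_max_norm_add_norm_sub_add {u v : E} (h : ‖v‖ ≤ ‖u‖) :
    √2 * ‖u‖ ≤ max ‖u + v‖ ‖u - v‖ + (‖u‖ - ‖v‖) :=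
  sqrt_two_mul_le_add_sub_of_sq_add_sq_le h ((norm_nonneg _).trans (le_max_left _ _))
    (sq_norm_add_sq_norm_le_sq_max_norm_add_norm_sub u v)

end InnerProductSpace

/-- If `A` is an atom of `μ` and `f := 1_A`, then for every `ψ ∈ L¹(μ)` with
`‖ψ‖₁ = ‖f‖₁` one has `max(‖f + ψ‖₁, ‖f − ψ‖₁) ≥ √2 · ‖f‖₁`. -/
theorem sqrt_two_obstruction_of_atom {α : Type*} [MeasurableSpace α] (μ : Measure α)
    (A : Set α) (hA : IsMeasureAtom μ A) (ψ : α → ℂ) (hψ : Integrable ψ μ)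
    (hnorm : ∫ x, ‖ψ x‖ ∂μ = ∫ x, ‖A.indicator (fun _ => (1 : ℂ)) x‖ ∂μ) :
    Real.sqrt 2 * ∫ x, ‖A.indicator (fun _ => (1 : ℂ)) x‖ ∂μ ≤
      max (∫ x, ‖A.indicator (fun _ => (1 : ℂ)) x + ψ x‖ ∂μ)
        (∫ x, ‖A.indicator (fun _ => (1 : ℂ)) x - ψ x‖ ∂μ) := by
  obtain ⟨c, hc⟩ := hA.exists_ae_restrict_eq_const hψ.aemeasurable.restrict
  obtain ⟨hmA, hpos, hfin, -⟩ := hA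
  have hm : 0 < μ.real A := ENNReal.toReal_pos hpos.ne' hfin.ne
  set T := ∫ x in Aᶜ, ‖ψ x‖ ∂μ
  have hT : 0 ≤ T := setIntegral_nonneg hmA.compl fun _ _ => norm_nonneg _
  have hf : ∫ x, ‖A.indicator (fun _ => (1 : ℂ)) x‖ ∂μ = μ.real A := by
    simp [norm_indicator_eq_indicator_norm, integral_indicator_const _ hmA]
  have hψ' : ∫ x, ‖ψ x‖ ∂μ = ‖c‖ * μ.real A + T :=
    integral_norm_eq_of_ae_restrict_eq_const hmA hψ hc
  have hadd : ∫ x, ‖A.indicator (fun _ => (1 : ℂ)) x + ψ x‖ ∂μ = ‖1 + c‖ * μ.real A + T :=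
    integral_norm_indicator_const_add_eq hmA hfin.ne 1 hψ hc
  have hsub : ∫ x, ‖A.indicator (fun _ => (1 : ℂ)) x - ψ x‖ ∂μ = ‖1 - c‖ * μ.real A + T := by
    simp_rw [sub_eq_add_neg]
    rw [integral_norm_indicator_const_add_eq (g := fun x => -ψ x) (d := -c) hmA hfin.ne 1 hψ.neg
      hc.neg]
    simp only [norm_neg, T]
  rw [hψ', hf] at hnorm
  have hc1 : ‖c‖ ≤ ‖(1 : ℂ)‖ := by
    rw [norm_one]; nlinarith
  have key : √2 ≤ max ‖1 + c‖ ‖1 - c‖ + (1 - ‖c‖) := by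
    simpa only [norm_one, mul_one] using sqrt_two_mul_norm_le_max_norm_add_norm_sub_add hc1
  rw [hf, hadd, hsub, max_add_add_right, ← max_mul_of_nonneg _ _ hm.le]
  calc √2 * μ.real A ≤ (max ‖1 + c‖ ‖1 - c‖ + (1 - ‖c‖)) * μ.real A := by gcongr
    _ = max ‖1 + c‖ ‖1 - c‖ * μ.real A + T := by linarith
end

section
/- Let μ be a nonzero σ-finite measure. Then the following are equivalent: (i) μ is atomless; (ii) for every f ∈ L¹(μ) and every ε > 0 there exists ψ ∈ L¹(μ) with ‖ψ‖₁ = ‖f‖₁, ‖f‖₁ − ε < ‖f + ψ‖₁ < ‖f‖₁ + ε, and ‖f‖₁ − ε < ‖f − ψ‖₁ < ‖f‖₁ + ε. -/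
/-!
If `μ` is atomless, so is the measure `‖f‖ dμ`, and Sierpiński's theorem gives a measurable
`S` carrying exactly half of `‖f‖₁`; flipping the sign of `f` off `S` gives `ψ` with
`‖ψ‖₁ = ‖f + ψ‖₁ = ‖f - ψ‖₁ = ‖f‖₁`.

Conversely, on an atom `A` every measurable function is a.e. constant. For `f = 1_A` and
`‖ψ‖₁ = ‖f‖₁`, with `ψ = c` a.e. on `A`, this gives
`‖f ± ψ‖₁ = μ(A) ‖1 ± c‖ + ∫_{Aᶜ} ‖ψ‖`, and the parallelogram law
`‖1 + c‖² + ‖1 - c‖² = 2 + 2‖c‖²` forces one of them to exceed `‖f‖₁` by at least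
`‖f‖₁ / 3`.
-/

open MeasureTheory

open Set Filter Topology
open scoped ENNReal

theorem ENNReal.exists_mem_forall_le_two_mul {ι : Type*} {s : Set ι} (f : ι → ℝ≥0∞)
    (hs : s.Nonempty) {C : ℝ≥0∞} (hC : C ≠ ∞) (hf : ∀ i ∈ s, f i ≤ C) :
    ∃ i ∈ s, ∀ j ∈ s, f j ≤ 2 * f i := by
  set t := ⨆ i ∈ s, f i
  have hle : ∀ j ∈ s, f j ≤ t := fun j hj => le_biSup f hj
  rcases eq_or_ne t 0 with ht | ht
  · obtain ⟨i, hi⟩ := hs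
    exact ⟨i, hi, fun j hj => (hle j hj).trans (ht.trans_le zero_le)⟩
  · have ht_fin : t ≠ ∞ := ne_top_of_le_ne_top hC (iSup₂_le hf)
    obtain ⟨i, hi, hti⟩ := lt_biSup_iff.mp (ENNReal.half_lt_self ht ht_fin)
    refine ⟨i, hi, fun j hj => ?_⟩
    calc f j ≤ t := hle j hj
      _ = 2 * (t / 2) := (ENNReal.mul_div_cancel two_ne_zero ENNReal.ofNat_ne_top).symm
      _ ≤ 2 * f i := by gcongr

-- The sharp constant is `√2 - 1`, attained at `‖x‖ = 1`.
theorem norm_add_one_third_le_max_norm_add_norm_sub {F : Type*} [NormedAddCommGroup F]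
    [InnerProductSpace ℝ F] {e x : F} (he : ‖e‖ = 1) (hx : ‖x‖ ≤ 1) :
    ‖x‖ + 1 / 3 ≤ max ‖e + x‖ ‖e - x‖ := by
  have hpar := parallelogram_law_with_norm ℝ e x
  rw [he] at hpar
  by_contra! h
  obtain ⟨h₁, h₂⟩ := max_lt_iff.mp h
  nlinarith [norm_nonneg (e + x), norm_nonneg (e - x), norm_nonneg x]

namespace MeasureTheory

variable {α E : Type*} [MeasurableSpace α] [NormedAddCommGroup E] {μ : Measure α} {A : Set α}

theorem IsMeasureAtom.measurableSet (hA : IsMeasureAtom μ A) : MeasurableSet A := hA.1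

theorem IsMeasureAtom.measure_ne_top (hA : IsMeasureAtom μ A) : μ A ≠ ∞ := hA.2.2.1.ne

theorem IsMeasureAtom.measureReal_pos (hA : IsMeasureAtom μ A) : 0 < μ.real A :=
  ENNReal.toReal_pos hA.2.1.ne' hA.measure_ne_top

theorem IsMeasureAtom.ae_mem_or_ae_notMem (hA : IsMeasureAtom μ A) {s : Set α}
    (hs : MeasurableSet s) : (∀ᵐ x ∂μ.restrict A, x ∈ s) ∨ ∀ᵐ x ∂μ.restrict A, x ∉ s := by
  obtain ⟨hA, -, hA_fin, hA_atom⟩ := hA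
  rw [← measure_eq_zero_iff_ae_notMem, Filter.Eventually, ofPred_mem_eq, mem_ae_iff,
    Measure.restrict_apply hs, Measure.restrict_apply hs.compl, ← sdiff_eq_compl_inter]
  refine (hA_atom (s ∩ A) inter_subset_right (hs.inter hA)).symm.imp (fun h => ?_) id
  have hsum := measure_inter_add_sdiff (μ := μ) A hs
  rw [inter_comm, h] at hsum
  exact (ENNReal.add_right_inj hA_fin.ne).mp (hsum.trans (add_zero _).symm)

theorem IsMeasureAtom.exists_ae_eq_const {X : Type*} [MeasurableSpace X]
    [MeasurableSpace.CountablySeparated X] [Nonempty X] (hA : IsMeasureAtom μ A) {g : α → X}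
    (hg : AEMeasurable g (μ.restrict A)) : ∃ c, ∀ᵐ x ∂μ.restrict A, g x = c := by
  obtain ⟨c, hc⟩ :=
    exists_eventuallyEq_const_of_forall_separating (f := hg.mk g) MeasurableSet fun U hU =>
      hA.ae_mem_or_ae_notMem (hg.measurable_mk hU)
  exact ⟨c, hg.ae_eq_mk.trans hc⟩

/-- Not Mathlib's `NoAtoms`, which only asks singletons to be null. -/
def Measure.IsAtomless (μ : Measure α) : Prop :=
  ∀ A : Set α, ¬ IsMeasureAtom μ A

namespace Measure.IsAtomless

theorem exists_subset_measure_ne_zero_diff_ne_zero (hμ : μ.IsAtomless)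
    (hA : MeasurableSet A) (hA₀ : μ A ≠ 0) (hA_fin : μ A ≠ ∞) :
    ∃ B ⊆ A, MeasurableSet B ∧ μ B ≠ 0 ∧ μ (A \ B) ≠ 0 := by
  have := hμ A
  simp only [IsMeasureAtom, not_and, not_forall, not_or] at this
  obtain ⟨B, hBA, hB, hB₀, hBA'⟩ := this hA (pos_iff_ne_zero.mpr hA₀) hA_fin.lt_top
  exact ⟨B, hBA, hB, hB₀, fun h => hBA' (measure_eq_measure_of_null_sdiff hBA h)⟩

theorem exists_subset_measure_ne_zero_le_half (hμ : μ.IsAtomless) (hA : MeasurableSet A)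
    (hA₀ : μ A ≠ 0) (hA_fin : μ A ≠ ∞) :
    ∃ B ⊆ A, MeasurableSet B ∧ μ B ≠ 0 ∧ μ B ≤ μ A / 2 := by
  obtain ⟨B, hBA, hB, hB₀, hAB₀⟩ :=
    hμ.exists_subset_measure_ne_zero_diff_ne_zero hA hA₀ hA_fin
  have hsum : μ B + μ (A \ B) = μ A := by
    rw [measure_add_sdiff hB.nullMeasurableSet, union_eq_self_of_subset_left hBA]
  rcases le_total (μ B) (μ (A \ B)) with h | h
  · refine ⟨B, hBA, hB, hB₀, ?_⟩
    rw [ENNReal.le_div_iff_mul_le (Or.inl two_ne_zero) (Or.inl ENNReal.ofNat_ne_top)]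
    calc μ B * 2 = μ B + μ B := mul_two _
      _ ≤ μ A := hsum ▸ add_le_add le_rfl h
  · refine ⟨A \ B, sdiff_subset, hA.diff hB, hAB₀, ?_⟩
    rw [ENNReal.le_div_iff_mul_le (Or.inl two_ne_zero) (Or.inl ENNReal.ofNat_ne_top)]
    calc μ (A \ B) * 2 = μ (A \ B) + μ (A \ B) := mul_two _
      _ ≤ μ A := hsum ▸ add_le_add h le_rfl

theorem exists_subset_measure_ne_zero_le (hμ : μ.IsAtomless) (hA : MeasurableSet A)
    (hA₀ : μ A ≠ 0) (hA_fin : μ A ≠ ∞) {δ : ℝ≥0∞} (hδ : δ ≠ 0) :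
    ∃ B ⊆ A, MeasurableSet B ∧ μ B ≠ 0 ∧ μ B ≤ δ := by
  have halve : ∀ n : ℕ, ∃ B ⊆ A, MeasurableSet B ∧ μ B ≠ 0 ∧ μ B ≤ μ A * 2⁻¹ ^ n := by
    intro n
    induction n with
    | zero => exact ⟨A, subset_rfl, hA, hA₀, by simp⟩
    | succ n ih =>
      obtain ⟨B, hBA, hB, hB₀, hB_le⟩ := ih
      obtain ⟨C, hCB, hC, hC₀, hC_le⟩ := hμ.exists_subset_measure_ne_zero_le_half hB hB₀
        (ne_top_of_le_ne_top hA_fin (measure_mono hBA))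
      refine ⟨C, hCB.trans hBA, hC, hC₀, ?_⟩
      calc μ C ≤ μ B * 2⁻¹ :=
            hC_le.trans_eq (ENNReal.div_eq_inv_mul.trans (mul_comm _ _))
        _ ≤ μ A * 2⁻¹ ^ n * 2⁻¹ := by gcongr
        _ = μ A * 2⁻¹ ^ (n + 1) := by rw [pow_succ, mul_assoc]
  obtain ⟨n, hn⟩ := ENNReal.exists_inv_two_pow_lt (ENNReal.div_ne_zero.mpr ⟨hδ, hA_fin⟩)
  obtain ⟨B, hBA, hB, hB₀, hB_le⟩ := halve n
  refine ⟨B, hBA, hB, hB₀, ?_⟩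
  calc μ B ≤ μ A * 2⁻¹ ^ n := hB_le
    _ ≤ μ A * (δ / μ A) := by gcongr
    _ = δ := ENNReal.mul_div_cancel hA₀ hA_fin

theorem measure_eq_of_forall_subset_diff_measure_eq_zero (hμ : μ.IsAtomless)
    (hA : MeasurableSet A) (hA_fin : μ A ≠ ∞) {B : Set α} (hBA : B ⊆ A) (hB : MeasurableSet B)
    {c : ℝ≥0∞} (hBc : μ B ≤ c) (hcA : c ≤ μ A)
    (h : ∀ P ⊆ A \ B, MeasurableSet P → μ B + μ P ≤ c → μ P = 0) : μ B = c := by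
  refine hBc.antisymm (not_lt.mp fun hlt => ?_)
  have hAB₀ : μ (A \ B) ≠ 0 := by
    rw [measure_sdiff hBA hB.nullMeasurableSet
      (ne_top_of_le_ne_top hA_fin (measure_mono hBA))]
    exact (tsub_pos_of_lt (hlt.trans_le hcA)).ne'
  obtain ⟨P, hPAB, hP, hP₀, hP_le⟩ := hμ.exists_subset_measure_ne_zero_le (hA.diff hB) hAB₀
    (ne_top_of_le_ne_top hA_fin (measure_mono sdiff_subset)) (tsub_pos_of_lt hlt).ne'
  exact hP₀ (h P hPAB hP ((add_le_add le_rfl hP_le).trans_eq (add_tsub_cancel_of_le hBc)))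

/-- Sierpiński's theorem. -/
theorem exists_subset_measure_eq (hμ : μ.IsAtomless) (hA : MeasurableSet A)
    (hA_fin : μ A ≠ ∞) {c : ℝ≥0∞} (hcA : c ≤ μ A) : ∃ B ⊆ A, MeasurableSet B ∧ μ B = c := by
  -- Greedy exhaustion: each step adds at least half of what could still be added without
  -- exceeding `c`. The implication in `admissible` keeps the step defined at every `B`.
  let admissible (B : Set α) : Set (Set α) :=
    {Q | Q ⊆ A \ B ∧ MeasurableSet Q ∧ (μ B ≤ c → μ B + μ Q ≤ c)}
  have step (B : Set α) : ∃ Q ∈ admissible B, ∀ P ∈ admissible B, μ P ≤ 2 * μ Q :=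
    ENNReal.exists_mem_forall_le_two_mul μ ⟨∅, empty_subset _, .empty, by simp⟩ hA_fin
      fun Q hQ => measure_mono (hQ.1.trans sdiff_subset)
  choose Q hQ hQ_max using step
  let B : ℕ → Set α := fun n => Nat.rec ∅ (fun _ B => B ∪ Q B) n
  have hB (n : ℕ) : B n ⊆ A ∧ MeasurableSet (B n) ∧ μ (B n) ≤ c ∧
      μ (B n) = ∑ k ∈ Finset.range n, μ (Q (B k)) := by
    induction n with
    | zero => simp [B]
    | succ n ih =>
      obtain ⟨hBA, hBm, hBc, hB_sum⟩ := ih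
      obtain ⟨hQA, hQm, hQc⟩ := hQ (B n)
      have hB_succ : μ (B (n + 1)) = μ (B n) + μ (Q (B n)) :=
        measure_union (disjoint_sdiff_right.mono_right hQA) hQm
      exact ⟨union_subset hBA (hQA.trans sdiff_subset), hBm.union hQm, hB_succ ▸ hQc hBc,
        by rw [hB_succ, Finset.sum_range_succ, hB_sum]⟩
  have hQ_lim : Tendsto (fun n => 2 * μ (Q (B n))) atTop (𝓝 0) := by
    have hsum : ∑' n, μ (Q (B n)) ≠ ∞ :=
      ne_top_of_le_ne_top (ne_top_of_le_ne_top hA_fin hcA)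
        (ENNReal.tsum_le_of_sum_range_le fun n => (hB n).2.2.2 ▸ (hB n).2.2.1)
    simpa using ENNReal.Tendsto.const_mul (ENNReal.tendsto_atTop_zero_of_tsum_ne_top hsum)
      (Or.inr ENNReal.ofNat_ne_top)
  have hB_mono : Monotone B := monotone_nat_of_le_succ fun n => subset_union_left
  refine ⟨⋃ n, B n, iUnion_subset fun n => (hB n).1, .iUnion fun n => (hB n).2.1, ?_⟩
  refine hμ.measure_eq_of_forall_subset_diff_measure_eq_zero hA hA_fin
    (iUnion_subset fun n => (hB n).1) (.iUnion fun n => (hB n).2.1)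
    (hB_mono.measure_iUnion ▸ iSup_le fun n => (hB n).2.2.1) hcA fun P hP hPm hPc => ?_
  refine le_antisymm (ge_of_tendsto' hQ_lim fun n => hQ_max (B n) P ?_) zero_le
  have hBn : B n ⊆ ⋃ n, B n := subset_iUnion B n
  exact ⟨hP.trans (sdiff_subset_sdiff_right hBn), hPm,
    fun _ => (add_le_add (measure_mono hBn) le_rfl).trans hPc⟩

theorem withDensity (hμ : μ.IsAtomless) {g : α → ℝ≥0∞} (hg : Measurable g) :
    (μ.withDensity g).IsAtomless := by
  rintro A ⟨hA, hA₀, hA_fin, hA_atom⟩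
  set ν := μ.withDensity g
  -- On a part `E` of `A` where `g ≥ k > 0`, `μ` and `ν` have the same null sets, so splitting
  -- `E` with respect to `μ` splits the `ν`-atom `A`.
  obtain ⟨n, hn⟩ : ∃ n : ℕ, μ (A ∩ g ⁻¹' Ici (n : ℝ≥0∞)⁻¹) ≠ 0 := by
    by_contra! h
    refine hA₀.ne' ((withDensity_apply_eq_zero hg).mpr
      (measure_mono_null ?_ (measure_iUnion_null h)))
    rintro x ⟨hx, hxA⟩
    obtain ⟨n, hn⟩ := ENNReal.exists_inv_nat_lt hx
    exact mem_iUnion.mpr ⟨n, hxA, hn.le⟩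
  set k : ℝ≥0∞ := (n : ℝ≥0∞)⁻¹
  set E := A ∩ g ⁻¹' Ici k
  have hk : k ≠ 0 := ENNReal.inv_ne_zero.mpr (ENNReal.natCast_ne_top n)
  have hE : MeasurableSet E := hA.inter (hg measurableSet_Ici)
  have hν_ge (P : Set α) (hPE : P ⊆ E) (hP : MeasurableSet P) : k * μ P ≤ ν P := by
    rw [withDensity_apply g hP, ← setLIntegral_const]
    exact setLIntegral_mono hg fun x hx => (hPE hx).2
  have hν_eq (P : Set α) (hPE : P ⊆ E) (hP : MeasurableSet P) (hP₀ : μ P ≠ 0) : ν P = ν A :=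
    (hA_atom P (hPE.trans inter_subset_left) hP).resolve_left fun h =>
      mul_ne_zero hk hP₀ (nonpos_iff_eq_zero.mp (h ▸ hν_ge P hPE hP))
  have hE_fin : μ E ≠ ∞ := by
    intro h
    have := (hν_ge E subset_rfl hE).trans (measure_mono inter_subset_left)
    rw [h, ENNReal.mul_top hk, top_le_iff] at this
    exact hA_fin.ne this
  obtain ⟨B, hBE, hB, hB₀, hEB₀⟩ :=
    hμ.exists_subset_measure_ne_zero_diff_ne_zero hE hn hE_fin
  have hsplit : ν B + ν (E \ B) ≤ ν A := by
    rw [measure_add_sdiff hB.nullMeasurableSet, union_eq_self_of_subset_left hBE]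
    exact measure_mono inter_subset_left
  rw [hν_eq B hBE hB hB₀, hν_eq (E \ B) sdiff_subset (hE.diff hB) hEB₀] at hsplit
  exact (ENNReal.lt_add_right hA_fin.ne hA₀.ne').not_ge hsplit

theorem exists_setIntegral_norm_eq_half (hμ : μ.IsAtomless) {f : α → E}
    (hf : Integrable f μ) : ∃ S, MeasurableSet S ∧ ∫ x in S, ‖f x‖ ∂μ = (∫ x, ‖f x‖ ∂μ) / 2 := by
  have hf' : AEMeasurable (‖f ·‖ₑ) μ := hf.1.enorm
  have hν : (μ.withDensity (‖f ·‖ₑ)).IsAtomless := by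
    rw [withDensity_congr_ae hf'.ae_eq_mk]
    exact hμ.withDensity hf'.measurable_mk
  have hν_univ : μ.withDensity (‖f ·‖ₑ) univ = ∫⁻ x, ‖f x‖ₑ ∂μ := by
    rw [withDensity_apply _ .univ, Measure.restrict_univ]
  obtain ⟨S, -, hS, hνS⟩ :=
    hν.exists_subset_measure_eq .univ (hν_univ ▸ hf.2.ne) ENNReal.half_le_self
  refine ⟨S, hS, ?_⟩
  rw [integral_norm_eq_lintegral_enorm hf.1.restrict, integral_norm_eq_lintegral_enorm hf.1,
    ← withDensity_apply _ hS, hνS, hν_univ, ENNReal.toReal_div, ENNReal.toReal_ofNat]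

end Measure.IsAtomless

theorem L1.norm_eq_setIntegral_of_ae_eq_indicator {g : Lp E 1 μ} {S : Set α}
    (hS : MeasurableSet S) {u : α → E} (hg : g =ᵐ[μ] S.indicator u) :
    ‖g‖ = ∫ x in S, ‖u x‖ ∂μ := by
  rw [L1.norm_eq_integral_norm, integral_congr_ae (hg.mono fun x hx => congrArg norm hx),
    ← integral_indicator hS]
  simp_rw [norm_indicator_eq_indicator_norm]

theorem Measure.IsAtomless.exists_norm_eq_norm_add_eq_norm_sub [NormedSpace ℝ E]
    (hμ : μ.IsAtomless) (f : Lp E 1 μ) :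
    ∃ ψ : Lp E 1 μ, ‖ψ‖ = ‖f‖ ∧ ‖f + ψ‖ = ‖f‖ ∧ ‖f - ψ‖ = ‖f‖ := by
  classical
  have hf := L1.integrable_coeFn f
  obtain ⟨S, hS, hS_half⟩ := hμ.exists_setIntegral_norm_eq_half hf
  have hSc_half : ∫ x in Sᶜ, ‖f x‖ ∂μ = (∫ x, ‖f x‖ ∂μ) / 2 := by
    linarith [integral_add_compl hS hf.norm]
  have hψ : Integrable (S.piecewise f (-f)) μ :=
    Integrable.piecewise hS hf.integrableOn hf.neg.integrableOn
  have hψ_coe := hψ.coeFn_toL1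
  refine ⟨hψ.toL1 _, ?_, ?_, ?_⟩
  · rw [L1.norm_of_fun_eq_integral_norm, L1.norm_eq_integral_norm]
    congr 1 with x
    by_cases hx : x ∈ S <;> simp [hx]
  · have hadd : ⇑(f + hψ.toL1 _) =ᵐ[μ] S.indicator ((2 : ℝ) • ⇑f) := by
      filter_upwards [Lp.coeFn_add f (hψ.toL1 _), hψ_coe] with x h1 h2
      rw [h1, Pi.add_apply, h2]
      by_cases hx : x ∈ S <;> simp [hx, two_smul]
    calc ‖f + hψ.toL1 _‖ = 2 * ∫ x in S, ‖f x‖ ∂μ := by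
          simp [L1.norm_eq_setIntegral_of_ae_eq_indicator hS hadd, norm_smul,
            integral_const_mul]
      _ = ‖f‖ := by rw [hS_half, L1.norm_eq_integral_norm]; ring
  · have hsub : ⇑(f - hψ.toL1 _) =ᵐ[μ] Sᶜ.indicator ((2 : ℝ) • ⇑f) := by
      filter_upwards [Lp.coeFn_sub f (hψ.toL1 _), hψ_coe] with x h1 h2
      rw [h1, Pi.sub_apply, h2]
      by_cases hx : x ∈ S <;> simp [hx, two_smul]
    calc ‖f - hψ.toL1 _‖ = 2 * ∫ x in Sᶜ, ‖f x‖ ∂μ := by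
          simp [L1.norm_eq_setIntegral_of_ae_eq_indicator hS.compl hsub, norm_smul,
            integral_const_mul]
      _ = ‖f‖ := by rw [hSc_half, L1.norm_eq_integral_norm]; ring

theorem indicatorConstLp_zero (p : ℝ≥0∞) (hA : MeasurableSet A) (hA_fin : μ A ≠ ∞) :
    indicatorConstLp p hA hA_fin (0 : E) = 0 := by
  simp only [indicatorConstLp, indicator_zero]
  exact MemLp.toLp_zero _

theorem norm_indicatorConstLp_one_add (hA : MeasurableSet A) (hA_fin : μ A ≠ ∞) (b : E)
    {ψ : Lp E 1 μ} {c : E} (hψ : ∀ᵐ x ∂μ.restrict A, ψ x = c) :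
    ‖indicatorConstLp 1 hA hA_fin b + ψ‖ = μ.real A * ‖b + c‖ + ∫ x in Aᶜ, ‖ψ x‖ ∂μ := by
  have hcoe : ⇑(indicatorConstLp 1 hA hA_fin b + ψ) =ᵐ[μ] A.indicator (fun _ => b) + ψ :=
    (Lp.coeFn_add _ _).trans (indicatorConstLp_coeFn.add EventuallyEq.rfl)
  rw [L1.norm_eq_integral_norm, ← integral_add_compl hA (L1.integrable_coeFn _).norm,
    ← smul_eq_mul, ← setIntegral_const]
  congr 1 <;> refine integral_congr_ae ?_
  · filter_upwards [ae_restrict_mem hA, ae_restrict_of_ae hcoe, hψ] with x hxA h h'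
    rw [h, Pi.add_apply, indicator_of_mem hxA, h']
  · filter_upwards [ae_restrict_mem hA.compl, ae_restrict_of_ae hcoe] with x hxA h
    rw [h, Pi.add_apply, indicator_of_notMem hxA, zero_add]

theorem IsMeasureAtom.norm_indicatorConstLp_one (hA : IsMeasureAtom μ A) :
    ‖indicatorConstLp 1 hA.measurableSet hA.measure_ne_top (1 : ℂ)‖ = μ.real A := by
  simp [norm_indicatorConstLp]

theorem IsMeasureAtom.add_div_three_le_max_norm_add_norm_sub (hA : IsMeasureAtom μ A)
    {ψ : Lp ℂ 1 μ} (hψ : ‖ψ‖ = μ.real A) :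
    μ.real A + μ.real A / 3 ≤
      max ‖indicatorConstLp 1 hA.measurableSet hA.measure_ne_top (1 : ℂ) + ψ‖
        ‖indicatorConstLp 1 hA.measurableSet hA.measure_ne_top (1 : ℂ) - ψ‖ := by
  obtain ⟨c, hc⟩ := hA.exists_ae_eq_const (Lp.aestronglyMeasurable ψ).aemeasurable.restrict
  have hc_neg : ∀ᵐ x ∂μ.restrict A, (-ψ) x = -c := by
    filter_upwards [ae_restrict_of_ae (Lp.coeFn_neg ψ), hc] with x h h'
    rw [h, Pi.neg_apply, h']
  set r := ∫ x in Aᶜ, ‖ψ x‖ ∂μ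
  have hr : 0 ≤ r := integral_nonneg fun _ => norm_nonneg _
  have hψ_split : ‖ψ‖ = μ.real A * ‖c‖ + r := by
    simpa [indicatorConstLp_zero] using norm_indicatorConstLp_one_add hA.measurableSet
      hA.measure_ne_top 0 hc
  have hadd := norm_indicatorConstLp_one_add hA.measurableSet hA.measure_ne_top 1 hc
  have hsub : ‖indicatorConstLp 1 hA.measurableSet hA.measure_ne_top (1 : ℂ) - ψ‖ =
      μ.real A * ‖1 - c‖ + r := by
    rw [sub_eq_add_neg, norm_indicatorConstLp_one_add _ _ _ hc_neg, ← sub_eq_add_neg]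
    congr 1
    exact integral_congr_ae ((ae_restrict_of_ae (Lp.coeFn_neg ψ)).mono fun x h => by
      simp only [h, Pi.neg_apply, norm_neg])
  have hc_le : ‖c‖ ≤ 1 := by nlinarith [hA.measureReal_pos]
  have key := norm_add_one_third_le_max_norm_add_norm_sub (e := (1 : ℂ)) norm_one hc_le
  rw [hadd, hsub, max_add_add_right, ← mul_max_of_nonneg _ _ hA.measureReal_pos.le]
  nlinarith [hA.measureReal_pos]

end MeasureTheory

theorem atomless_iff_approx_norm_equation_general {α : Type*} [MeasurableSpace α]
    (μ : Measure α) :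
    (∀ A : Set α, ¬ IsMeasureAtom μ A) ↔
      (∀ f : Lp ℂ 1 μ, ∀ ε : ℝ, 0 < ε → ∃ ψ : Lp ℂ 1 μ, ‖ψ‖ = ‖f‖ ∧
        (‖f‖ - ε < ‖f + ψ‖ ∧ ‖f + ψ‖ < ‖f‖ + ε) ∧
        (‖f‖ - ε < ‖f - ψ‖ ∧ ‖f - ψ‖ < ‖f‖ + ε)) := by
  refine ⟨fun hμ f ε hε => ?_, fun h A hA => ?_⟩
  · obtain ⟨ψ, hψ, hadd, hsub⟩ := Measure.IsAtomless.exists_norm_eq_norm_add_eq_norm_sub hμ f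
    exact ⟨ψ, hψ, by constructor <;> linarith, by constructor <;> linarith⟩
  · have hf := hA.norm_indicatorConstLp_one
    obtain ⟨ψ, hψ, ⟨-, hadd⟩, -, hsub⟩ := h _ (μ.real A / 3) (by linarith [hA.measureReal_pos])
    have := hA.add_div_three_le_max_norm_add_norm_sub (hψ.trans hf)
    rcases le_max_iff.mp this with h' | h' <;> linarith

/-- For a nonzero σ-finite measure `μ`: `μ` is atomless iff for every `f ∈ L¹(μ)` and
`ε > 0` there is `ψ ∈ L¹(μ)` with `‖ψ‖₁ = ‖f‖₁` and
`‖f‖₁ − ε < ‖f ± ψ‖₁ < ‖f‖₁ + ε`. -/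
theorem atomless_iff_approx_norm_equation {α : Type*} [MeasurableSpace α]
    (μ : Measure α) [SigmaFinite μ] (hμ : μ ≠ 0) :
    (∀ A : Set α, ¬ IsMeasureAtom μ A) ↔
      (∀ f : Lp ℂ 1 μ, ∀ ε : ℝ, 0 < ε → ∃ ψ : Lp ℂ 1 μ, ‖ψ‖ = ‖f‖ ∧
        (‖f‖ - ε < ‖f + ψ‖ ∧ ‖f + ψ‖ < ‖f‖ + ε) ∧
        (‖f‖ - ε < ‖f - ψ‖ ∧ ‖f - ψ‖ < ‖f‖ + ε)) :=
  atomless_iff_approx_norm_equation_general μ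
end
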